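/- arXiv:2202.05247 — 3 statements merged into one kernel-verified Lean document; each statement's English description precedes it below -/
import Mathlib

section
/- Let 𝔍 : 𝒟 → [0,∞) be monotone and locally non-vanishing with 𝔍(Q₀) > 0 for some Q₀ ∈ 𝒟 and dim_∞(𝔍) ∈ (0,∞). Then τ_𝔍 is real-valued (finite), convex and strictly decreasing on [0,∞); in particular, if q_𝔍 > 0 then q_𝔍 is the unique zero of τ_𝔍. -/
open MeasureTheory Filter Set Topology Classical

noncomputable section

/-- The half-open dyadic cube of generation `n` with index `k` inside `[0,1)^d`. -/
def dyadicCube (d n : ℕ) (k : Fin d → ℕ) : Set (Fin d → ℝ) :=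
  {x | ∀ i, (k i : ℝ) / 2 ^ n ≤ x i ∧ x i < ((k i : ℝ) + 1) / 2 ^ n}

/-- The family `𝒟_n` of dyadic cubes of generation `n`. -/
def dyadicLevel (d n : ℕ) : Set (Set (Fin d → ℝ)) :=
  {Q | ∃ k : Fin d → ℕ, (∀ i, k i < 2 ^ n) ∧ Q = dyadicCube d n k}

/-- The collection `𝒟` of all dyadic cubes. -/
def dyadicFamily (d : ℕ) : Set (Set (Fin d → ℝ)) := ⋃ n, dyadicLevel d n

/-- The half-open unit cube `𝒬 = [0,1)^d`. -/
def unitCube (d : ℕ) : Set (Fin d → ℝ) := {x | ∀ i, 0 ≤ x i ∧ x i < 1}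

/-- The Dirichlet family `𝒟_n^D`: cubes whose closure misses the boundary of `[0,1]^d`. -/
def dyadicLevelD (d n : ℕ) : Set (Set (Fin d → ℝ)) :=
  {Q | Q ∈ dyadicLevel d n ∧
    closure Q ∩ frontier (Set.pi Set.univ fun _ : Fin d => Set.Icc (0:ℝ) 1) = ∅}

/-- Extended-real logarithm, with `log x = -∞` for `x ≤ 0`. -/
def elog (x : ℝ) : EReal := if x ≤ 0 then (⊥ : EReal) else ((Real.log x : ℝ) : EReal)

/-- `∑_{Q ∈ F} 𝔍(Q)^q`, with the convention `0^0 = 0`. -/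
def cubeSum {d : ℕ} (F : Set (Set (Fin d → ℝ))) (J : Set (Fin d → ℝ) → ℝ) (q : ℝ) : ℝ :=
  ∑' Q : F, if J (Q : Set (Fin d → ℝ)) = 0 then 0 else J (Q : Set (Fin d → ℝ)) ^ q

/-- `τ_{𝔍,n}(q) = log (∑_{Q ∈ Fam n} 𝔍(Q)^q) / (n log 2)`, valued in `[-∞,∞]`. -/
def tauApprox {d : ℕ} (Fam : ℕ → Set (Set (Fin d → ℝ))) (J : Set (Fin d → ℝ) → ℝ)
    (n : ℕ) (q : ℝ) : EReal :=
  elog (cubeSum (Fam n) J q) * ((((n : ℝ) * Real.log 2)⁻¹ : ℝ) : EReal)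

/-- The partition function `τ_𝔍(q) = limsup_n τ_{𝔍,n}(q)`. -/
def tauFn {d : ℕ} (Fam : ℕ → Set (Set (Fin d → ℝ))) (J : Set (Fin d → ℝ) → ℝ) (q : ℝ) :
    EReal :=
  Filter.limsup (fun n => tauApprox Fam J n q) Filter.atTop

/-- `q_𝔍 = inf {q ≥ 0 : τ_𝔍(q) < 0}` (equal to `⊤` if no such `q` exists). -/
def qCrit {d : ℕ} (Fam : ℕ → Set (Set (Fin d → ℝ))) (J : Set (Fin d → ℝ) → ℝ) : EReal :=
  sInf {x : EReal | ∃ q : ℝ, 0 ≤ q ∧ x = (q : EReal) ∧ tauFn Fam J q < 0}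

/-- `max_{Q ∈ Fam n} 𝔍(Q)`. -/
def maxJ {d : ℕ} (Fam : ℕ → Set (Set (Fin d → ℝ))) (J : Set (Fin d → ℝ) → ℝ) (n : ℕ) : ℝ :=
  sSup (J '' Fam n)

/-- The lower `∞`-dimension `dim_∞(𝔍) = liminf_n (max_{Q∈𝒟_n} log 𝔍(Q))/(-n log 2)`. -/
def dimInfty {d : ℕ} (Fam : ℕ → Set (Set (Fin d → ℝ))) (J : Set (Fin d → ℝ) → ℝ) : EReal :=
  Filter.liminf
    (fun n => elog (maxJ Fam J n) * (((-(((n : ℝ) * Real.log 2)⁻¹)) : ℝ) : EReal))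
    Filter.atTop

/-- The support of a set function `𝔍` on the dyadic cubes. -/
def suppJ {d : ℕ} (J : Set (Fin d → ℝ) → ℝ) : Set (Fin d → ℝ) :=
  ⋂ k : ℕ, ⋃ n : ℕ, ⋃ (_ : k ≤ n), ⋃ Q ∈ {Q ∈ dyadicLevel d n | 0 < J Q}, closure Q

/-- The upper Minkowski dimension of `supp 𝔍`, computed along dyadic cubes. -/
def dimMink {d : ℕ} (J : Set (Fin d → ℝ) → ℝ) : EReal :=
  Filter.limsup
    (fun n => elog (({Q ∈ dyadicLevel d n | (Q ∩ suppJ J).Nonempty}).ncard : ℝ) *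
      ((((n : ℝ) * Real.log 2)⁻¹ : ℝ) : EReal)) Filter.atTop

/-- `𝔍 : 𝒟 → [0,∞)`. -/
def CubeNonneg {d : ℕ} (J : Set (Fin d → ℝ) → ℝ) : Prop := ∀ Q ∈ dyadicFamily d, 0 ≤ J Q

/-- `𝔍` is monotone on dyadic cubes. -/
def CubeMonotone {d : ℕ} (J : Set (Fin d → ℝ) → ℝ) : Prop :=
  ∀ Q ∈ dyadicFamily d, ∀ Q' ∈ dyadicFamily d, Q' ⊆ Q → J Q' ≤ J Q

/-- `𝔍` is locally non-vanishing. -/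
def LocallyNonVanishing {d : ℕ} (J : Set (Fin d → ℝ) → ℝ) : Prop :=
  ∀ Q ∈ dyadicFamily d, 0 < J Q → ∃ Q' ∈ dyadicFamily d, Q' ⊂ Q ∧ 0 < J Q'

/-- `𝔍` is uniformly vanishing: `max_{Q∈𝒟_n} 𝔍(Q) → 0`. -/
def UniformlyVanishing {d : ℕ} (J : Set (Fin d → ℝ) → ℝ) : Prop :=
  Filter.Tendsto (fun n => maxJ (dyadicLevel d) J n) Filter.atTop (nhds 0)

/-- `κ_𝔍 = inf {q ≥ 0 : ∑_{Q ∈ 𝒟} 𝔍(Q)^q < ∞}`. -/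
def kappaCrit {d : ℕ} (J : Set (Fin d → ℝ) → ℝ) : EReal :=
  sInf {x : EReal | ∃ q : ℝ, 0 ≤ q ∧ x = (q : EReal) ∧
    Summable (fun Q : dyadicFamily d =>
      if J (Q : Set (Fin d → ℝ)) = 0 then 0 else J (Q : Set (Fin d → ℝ)) ^ q)}

/-- positive part of the logarithm -/
def logPlus (x : ℝ) : ℝ := max (Real.log x) 0

/-- `N_{α,𝔍}(n)`: the number of cubes `Q` of generation `n` with `𝔍(Q) ≥ 2^{-αn}`. -/
def NCount {d : ℕ} (Fam : ℕ → Set (Set (Fin d → ℝ))) (J : Set (Fin d → ℝ) → ℝ)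
    (α : ℝ) (n : ℕ) : ℕ :=
  ({Q ∈ Fam n | (2 : ℝ) ^ (-(α * n)) ≤ J Q}).ncard

/-- The upper optimised coarse multifractal dimension `F̄_𝔍`. -/
def FUpper {d : ℕ} (Fam : ℕ → Set (Set (Fin d → ℝ))) (J : Set (Fin d → ℝ) → ℝ) : EReal :=
  ⨆ (α : ℝ) (_ : 0 < α),
    Filter.limsup
      (fun n => ((logPlus (NCount Fam J α n) / (α * n * Real.log 2) : ℝ) : EReal))
      Filter.atTop

/-- The lower optimised coarse multifractal dimension `F̲_𝔍`. -/
def FLower {d : ℕ} (Fam : ℕ → Set (Set (Fin d → ℝ))) (J : Set (Fin d → ℝ) → ℝ) : EReal :=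
  ⨆ (α : ℝ) (_ : 0 < α),
    Filter.liminf
      (fun n => ((logPlus (NCount Fam J α n) / (α * n * Real.log 2) : ℝ) : EReal))
      Filter.atTop

/-- `P` is a `𝔍`-partition: the positive-`𝔍` part of a finite dyadic partition of `𝒬`. -/
def IsJPartition {d : ℕ} (J : Set (Fin d → ℝ) → ℝ) (P : Set (Set (Fin d → ℝ))) : Prop :=
  ∃ R : Set (Set (Fin d → ℝ)), R.Finite ∧ R ⊆ dyadicFamily d ∧
    R.PairwiseDisjoint id ∧ ⋃₀ R = unitCube d ∧ P = {Q ∈ R | 0 < J Q}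

/-- `M_𝔍(x)`: minimal cardinality of a `𝔍`-partition with `𝔍(Q) < 1/x` on all its cubes. -/
def MJ {d : ℕ} (J : Set (Fin d → ℝ) → ℝ) (x : ℝ) : ℕ :=
  sInf {m : ℕ | ∃ P : Set (Set (Fin d → ℝ)),
    IsJPartition J P ∧ P.ncard = m ∧ ∀ Q ∈ P, J Q < 1 / x}

/-- The upper `𝔍`-partition entropy `h̄_𝔍`. -/
def hUpper {d : ℕ} (J : Set (Fin d → ℝ) → ℝ) : EReal :=
  Filter.limsup (fun x : ℝ => ((Real.log (MJ J x) / Real.log x : ℝ) : EReal)) Filter.atTop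

/-- The lower `𝔍`-partition entropy `h̲_𝔍`. -/
def hLower {d : ℕ} (J : Set (Fin d → ℝ) → ℝ) : EReal :=
  Filter.liminf (fun x : ℝ => ((Real.log (MJ J x) / Real.log x : ℝ) : EReal)) Filter.atTop

/-- The set function `Q ↦ ν(Q)` associated with a measure `ν`. -/
def nuFn {d : ℕ} (ν : Measure (Fin d → ℝ)) : Set (Fin d → ℝ) → ℝ := fun Q => (ν Q).toReal

/-- `𝔍_{ν,a,b}(Q) = sup_{Q'∈𝒟(Q)} ν(Q')^b Λ(Q')^a` (for `a ≠ 0`). -/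
def Jab {d : ℕ} (ν : Measure (Fin d → ℝ)) (a b : ℝ) (Q : Set (Fin d → ℝ)) : ℝ :=
  sSup ((fun Q' => (ν Q').toReal ^ b * (volume Q').toReal ^ a) ''
    {Q' | Q' ∈ dyadicFamily d ∧ Q' ⊆ Q})

/-- `𝔍_{ν,0,b}(Q) = sup_{Q'∈𝒟(Q)} ν(Q')^b |log Λ(Q')|`. -/
def J0b {d : ℕ} (ν : Measure (Fin d → ℝ)) (b : ℝ) (Q : Set (Fin d → ℝ)) : ℝ :=
  sSup ((fun Q' => (ν Q').toReal ^ b * |Real.log (volume Q').toReal|) ''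
    {Q' | Q' ∈ dyadicFamily d ∧ Q' ⊆ Q})

/-- The spectral set function `𝔍_ν = 𝔍_{ν,2/d-1,1}`. -/
def Jnu {d : ℕ} (ν : Measure (Fin d → ℝ)) : Set (Fin d → ℝ) → ℝ :=
  Jab ν (2 / (d : ℝ) - 1) 1

namespace S2

lemma two_pow_pos (n : ℕ) : (0:ℝ) < 2 ^ n := by positivity

lemma corner_mem (d n : ℕ) (k : Fin d → ℕ) :
    (fun i => (k i : ℝ) / 2 ^ n) ∈ dyadicCube d n k := by
  intro i
  refine ⟨le_refl _, ?_⟩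
  have h := two_pow_pos n
  exact div_lt_div_of_pos_right (lt_add_one _) h

lemma cube_nonempty (d n : ℕ) (k : Fin d → ℕ) : (dyadicCube d n k).Nonempty :=
  ⟨_, corner_mem d n k⟩

/-- From containment of cubes, containment of coordinate intervals. -/
lemma interval_of_subset {d : ℕ} (hd : 0 < d) {m' m : ℕ} {k' k : Fin d → ℕ}
    (hsub : dyadicCube d m' k' ⊆ dyadicCube d m k) (i : Fin d) :
    (k i : ℝ) / 2 ^ m ≤ (k' i : ℝ) / 2 ^ m' ∧
      ((k' i : ℝ) + 1) / 2 ^ m' ≤ ((k i : ℝ) + 1) / 2 ^ m := by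
  have hc := hsub (corner_mem d m' k')
  refine ⟨(hc i).1, ?_⟩
  by_contra hlt
  push_neg at hlt
  set t : ℝ := max ((k' i : ℝ) / 2 ^ m') (((k i : ℝ) + 1) / 2 ^ m) with ht
  have htmem : (Function.update (fun j => (k' j : ℝ) / 2 ^ m') i t) ∈ dyadicCube d m' k' := by
    intro j
    rcases eq_or_ne j i with rfl | hj
    · rw [Function.update_self]
      refine ⟨le_max_left _ _, ?_⟩
      apply max_lt (div_lt_div_of_pos_right (lt_add_one _) (two_pow_pos m')) hlt
    · rw [Function.update_of_ne hj]
      exact corner_mem d m' k' j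
  have h2 := (hsub htmem) i
  rw [Function.update_self] at h2
  exact absurd h2.2 (not_lt.2 (le_max_right _ _))

/-- A strict containment of dyadic cubes forces a strictly deeper level. -/
lemma level_lt_of_ssubset {d : ℕ} (hd : 0 < d) {m' m : ℕ} {k' k : Fin d → ℕ}
    (hsub : dyadicCube d m' k' ⊂ dyadicCube d m k) : m < m' := by
  have key := fun i => interval_of_subset hd hsub.1 i
  have i0 : Fin d := ⟨0, hd⟩
  have h1 := key i0
  -- length comparison : 1/2^m' ≤ 1/2^m
  have hlen : (1:ℝ) / 2 ^ m' ≤ 1 / 2 ^ m := by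
    have := sub_le_sub h1.2 h1.1
    calc (1:ℝ) / 2 ^ m' = ((k' i0 : ℝ) + 1) / 2 ^ m' - (k' i0 : ℝ) / 2 ^ m' := by ring
    _ ≤ ((k i0 : ℝ) + 1) / 2 ^ m - (k i0 : ℝ) / 2 ^ m := this
    _ = 1 / 2 ^ m := by ring
  have hmm : m ≤ m' := by
    by_contra hc
    push_neg at hc
    have : (2:ℝ) ^ m' < 2 ^ m := by
      exact pow_lt_pow_right₀ one_lt_two hc
    have := div_lt_div_of_pos_left one_pos (two_pow_pos m') this
    linarith
  rcases lt_or_eq_of_le hmm with h | h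
  · exact h
  · exfalso
    subst h
    have heq : k' = k := by
      funext i
      have hi := key i
      have h2 := two_pow_pos m
      have hle1 : (k i : ℝ) ≤ k' i := by
        have := (div_le_div_iff_of_pos_right h2).1 hi.1
        exact this
      have hle2 : (k' i : ℝ) ≤ k i := by
        have := (div_le_div_iff_of_pos_right h2).1 hi.2
        linarith
      exact_mod_cast le_antisymm hle2 hle1
    subst heq
    exact hsub.2 (le_refl _)

/-- Ancestor cube. -/
lemma ancestor {d : ℕ} {m n : ℕ} (hnm : n ≤ m) (k : Fin d → ℕ) (hk : ∀ i, k i < 2 ^ m) :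
    (∀ i, k i / 2 ^ (m - n) < 2 ^ n) ∧
      dyadicCube d m k ⊆ dyadicCube d n (fun i => k i / 2 ^ (m - n)) := by
  set e := m - n with he
  have hme : m = n + e := by omega
  have h2n := two_pow_pos n
  have h2m := two_pow_pos m
  have h2e : (0:ℕ) < 2 ^ e := by positivity
  have hpowR : (2:ℝ) ^ m = 2 ^ n * 2 ^ e := by rw [hme, pow_add]
  constructor
  · intro i
    apply Nat.div_lt_of_lt_mul
    have h3 : (2:ℕ) ^ e * 2 ^ n = 2 ^ m := by rw [hme]; ring
    have := hk i
    omega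
  · intro x hx i
    have hxi := hx i
    have hnat1 : k i / 2 ^ e * 2 ^ e ≤ k i := Nat.div_mul_le_self _ _
    have hnat2 : k i + 1 ≤ (k i / 2 ^ e + 1) * 2 ^ e := by
      have h1 := Nat.div_add_mod (k i) (2 ^ e)
      have h2 := Nat.mod_lt (k i) h2e
      nlinarith [h1, h2]
    constructor
    · rw [div_le_iff₀ h2n]
      calc ((k i / 2 ^ e : ℕ) : ℝ) = ((k i / 2 ^ e * 2 ^ e : ℕ) : ℝ) / 2 ^ e := by
            push_cast; field_simp
      _ ≤ (k i : ℝ) / 2 ^ e := by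
            gcongr
      _ = (k i : ℝ) / 2 ^ m * 2 ^ n := by rw [hpowR]; field_simp
      _ ≤ x i * 2 ^ n := by
            apply mul_le_mul_of_nonneg_right hxi.1 h2n.le
    · have hstep : ((k i : ℝ) + 1) / 2 ^ m ≤ (((k i / 2 ^ e : ℕ) : ℝ) + 1) / 2 ^ n := by
        rw [div_le_div_iff₀ h2m h2n, hpowR]
        have : ((k i : ℝ) + 1) ≤ (((k i / 2 ^ e : ℕ) : ℝ) + 1) * 2 ^ e := by
          exact_mod_cast hnat2
        nlinarith [two_pow_pos n, two_pow_pos e]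
      exact hxi.2.trans_le hstep

end S2
namespace S2

lemma mem_family_of_level {d n : ℕ} {Q : Set (Fin d → ℝ)} (h : Q ∈ dyadicLevel d n) :
    Q ∈ dyadicFamily d := Set.mem_iUnion.2 ⟨n, h⟩

lemma unit_eq (d : ℕ) : unitCube d = dyadicCube d 0 (fun _ => 0) := by
  ext x; simp [unitCube, dyadicCube]

lemma unit_mem_level0 (d : ℕ) : unitCube d ∈ dyadicLevel d 0 :=
  ⟨fun _ => 0, fun _ => by norm_num, unit_eq d⟩

lemma unit_mem_family (d : ℕ) : unitCube d ∈ dyadicFamily d :=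
  mem_family_of_level (unit_mem_level0 d)

lemma cube_subset_unit {d n : ℕ} {k : Fin d → ℕ} (hk : ∀ i, k i < 2 ^ n) :
    dyadicCube d n k ⊆ unitCube d := by
  intro x hx i
  have h1 := (hx i).1
  have h2 := (hx i).2
  have h2n := two_pow_pos n
  constructor
  · have : (0:ℝ) ≤ (k i : ℝ) / 2 ^ n := by positivity
    linarith
  · have hki : ((k i : ℝ) + 1) ≤ 2 ^ n := by
      have := hk i
      have : ((k i : ℝ) + 1) ≤ ((2:ℝ) ^ n : ℝ) := by exact_mod_cast this
      exact this
    have : ((k i : ℝ) + 1) / 2 ^ n ≤ 1 := by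
      rw [div_le_one h2n]; exact hki
    linarith

/-- the level as a finset -/
def levelFinset (d n : ℕ) : Finset (Set (Fin d → ℝ)) :=
  (Fintype.piFinset fun _ : Fin d => Finset.range (2 ^ n)).image (dyadicCube d n)

lemma coe_levelFinset (d n : ℕ) : (levelFinset d n : Set (Set (Fin d → ℝ))) = dyadicLevel d n := by
  ext Q
  simp only [levelFinset, Finset.coe_image, Set.mem_image, Finset.mem_coe,
    Fintype.mem_piFinset, Finset.mem_range, dyadicLevel, Set.mem_setOf_eq]
  constructor
  · rintro ⟨k, hk, rfl⟩; exact ⟨k, hk, rfl⟩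
  · rintro ⟨k, hk, rfl⟩; exact ⟨k, hk, rfl⟩

lemma mem_levelFinset {d n : ℕ} {Q : Set (Fin d → ℝ)} :
    Q ∈ levelFinset d n ↔ Q ∈ dyadicLevel d n := by
  rw [← coe_levelFinset]; rfl

lemma card_levelFinset_le (d n : ℕ) : (levelFinset d n).card ≤ 2 ^ (n * d) := by
  refine (Finset.card_image_le).trans ?_
  rw [Fintype.card_piFinset]
  simp [Finset.card_range, ← pow_mul]

lemma cubeSum_eq {d n : ℕ} (J : Set (Fin d → ℝ) → ℝ) (q : ℝ) :
    cubeSum (dyadicLevel d n) J q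
      = ∑ Q ∈ levelFinset d n, (if J Q = 0 then 0 else J Q ^ q) := by
  rw [cubeSum, ← coe_levelFinset]
  exact Finset.tsum_subtype (levelFinset d n) (fun Q => if J Q = 0 then 0 else J Q ^ q)

/-- every level contains a cube with positive value -/
lemma pos_at_level {d : ℕ} (hd : 0 < d) {J : Set (Fin d → ℝ) → ℝ}
    (hmono : CubeMonotone J) (hloc : LocallyNonVanishing J)
    (hpos : ∃ Q ∈ dyadicFamily d, 0 < J Q) :
    ∀ n, ∃ Q ∈ dyadicLevel d n, 0 < J Q := by
  obtain ⟨Q₀, hQ₀f, hJQ₀⟩ := hpos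
  obtain ⟨n₀, hQ₀⟩ := Set.mem_iUnion.1 hQ₀f
  -- ancestor step
  have anc : ∀ m n, n ≤ m → (∃ Q ∈ dyadicLevel d m, 0 < J Q) →
      ∃ Q ∈ dyadicLevel d n, 0 < J Q := by
    rintro m n hnm ⟨Q, ⟨k, hk, rfl⟩, hJQ⟩
    obtain ⟨hk', hsub⟩ := ancestor hnm k hk
    refine ⟨dyadicCube d n (fun i => k i / 2 ^ (m - n)), ⟨_, hk', rfl⟩, ?_⟩
    have := hmono _ (mem_family_of_level (⟨_, hk', rfl⟩ : _ ∈ dyadicLevel d n))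
      _ (mem_family_of_level (⟨k, hk, rfl⟩ : _ ∈ dyadicLevel d m)) hsub
    linarith
  -- deeper step
  have deeper : ∀ m, (∃ Q ∈ dyadicLevel d m, 0 < J Q) →
      ∃ m' > m, ∃ Q ∈ dyadicLevel d m', 0 < J Q := by
    rintro m ⟨Q, hQl, hJQ⟩
    obtain ⟨Q', hQ'f, hss, hJQ'⟩ := hloc Q (mem_family_of_level hQl) hJQ
    obtain ⟨m', hQ'l⟩ := Set.mem_iUnion.1 hQ'f
    obtain ⟨k, hk, rfl⟩ := hQl
    obtain ⟨k', hk', rfl⟩ := hQ'l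
    exact ⟨m', level_lt_of_ssubset hd hss, _, ⟨k', hk', rfl⟩, hJQ'⟩
  -- arbitrary depth
  have depth : ∀ j, ∃ m, j ≤ m ∧ ∃ Q ∈ dyadicLevel d m, 0 < J Q := by
    intro j
    induction j with
    | zero => exact ⟨n₀, Nat.zero_le _, Q₀, hQ₀, hJQ₀⟩
    | succ j ih =>
      obtain ⟨m, hjm, hP⟩ := ih
      rcases Nat.lt_or_ge m (j + 1) with h | h
      · have hm : m = j := by omega
        subst hm
        obtain ⟨m', hm', hP'⟩ := deeper m hP
        exact ⟨m', by omega, hP'⟩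
      · exact ⟨m, h, hP⟩
  intro n
  obtain ⟨m, hnm, hP⟩ := depth n
  exact anc m n hnm hP

end S2
namespace S2

section
variable {d : ℕ} {J : Set (Fin d → ℝ) → ℝ}

lemma level_finite (d n : ℕ) : (dyadicLevel d n).Finite := by
  rw [← coe_levelFinset]; exact (levelFinset d n).finite_toSet

lemma subset_unit {n : ℕ} {Q : Set (Fin d → ℝ)} (h : Q ∈ dyadicLevel d n) :
    Q ⊆ unitCube d := by
  obtain ⟨k, hk, rfl⟩ := h; exact cube_subset_unit hk

lemma J_nonneg (hnn : CubeNonneg J) {n : ℕ} {Q : Set (Fin d → ℝ)}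
    (h : Q ∈ dyadicLevel d n) : 0 ≤ J Q := hnn Q (mem_family_of_level h)

lemma J_le_M (hmono : CubeMonotone J) {n : ℕ} {Q : Set (Fin d → ℝ)}
    (h : Q ∈ dyadicLevel d n) : J Q ≤ J (unitCube d) :=
  hmono _ (unit_mem_family d) _ (mem_family_of_level h) (subset_unit h)

section
variable (hnn : CubeNonneg J) (hmono : CubeMonotone J)
  (hP : ∀ n, ∃ Q ∈ dyadicLevel d n, 0 < J Q)

include hmono hP in
lemma M_pos : 0 < J (unitCube d) := by
  obtain ⟨Q, hQ, hJQ⟩ := hP 0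
  exact hJQ.trans_le (J_le_M hmono hQ)

lemma maxJ_spec (n : ℕ) : ∃ Q ∈ dyadicLevel d n, J Q = maxJ (dyadicLevel d) J n := by
  have hfin : (J '' dyadicLevel d n).Finite := (level_finite d n).image J
  have hne : (J '' dyadicLevel d n).Nonempty := by
    obtain ⟨k, hk⟩ := cube_nonempty d n (fun _ => 0)
    exact ⟨J (dyadicCube d n (fun _ => 0)), ⟨_, ⟨fun _ => 0, fun i => by positivity, rfl⟩, rfl⟩⟩
  obtain ⟨Q, hQ, hJQ⟩ := hne.csSup_mem hfin
  exact ⟨Q, hQ, hJQ⟩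

lemma le_maxJ {n : ℕ} {Q : Set (Fin d → ℝ)} (h : Q ∈ dyadicLevel d n) :
    J Q ≤ maxJ (dyadicLevel d) J n :=
  le_csSup ((level_finite d n).image J).bddAbove ⟨Q, h, rfl⟩

include hP in
lemma maxJ_pos (n : ℕ) : 0 < maxJ (dyadicLevel d) J n := by
  obtain ⟨Q, hQ, hJQ⟩ := hP n
  exact hJQ.trans_le (le_maxJ hQ)

include hmono in
lemma maxJ_le_M (n : ℕ) : maxJ (dyadicLevel d) J n ≤ J (unitCube d) := by
  obtain ⟨Q, hQ, hJQ⟩ := maxJ_spec (J := J) n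
  rw [← hJQ]; exact J_le_M hmono hQ

include hnn hP in
lemma S_ge (n : ℕ) (q : ℝ) :
    maxJ (dyadicLevel d) J n ^ q ≤ cubeSum (dyadicLevel d n) J q := by
  obtain ⟨Q, hQ, hJQ⟩ := maxJ_spec (J := J) n
  rw [cubeSum_eq]
  have hQ' : Q ∈ levelFinset d n := mem_levelFinset.2 hQ
  have hmpos := maxJ_pos hP n
  have : (if J Q = 0 then 0 else J Q ^ q) = maxJ (dyadicLevel d) J n ^ q := by
    rw [if_neg (by rw [hJQ]; exact ne_of_gt hmpos), hJQ]
  rw [← this]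
  refine Finset.single_le_sum (f := fun R => if J R = 0 then 0 else J R ^ q) (fun R hR => ?_) hQ'
  by_cases h : J R = 0
  · simp [h]
  · have : 0 < J R := lt_of_le_of_ne (J_nonneg hnn (mem_levelFinset.1 hR)) (Ne.symm h)
    simp only [if_neg h]
    positivity

include hnn hmono hP in
lemma S_pos (n : ℕ) (q : ℝ) : 0 < cubeSum (dyadicLevel d n) J q :=
  lt_of_lt_of_le (Real.rpow_pos_of_pos (maxJ_pos hP n) q) (S_ge hnn hP n q)

include hnn hmono hP in
lemma S_le (n : ℕ) {q : ℝ} (hq : 0 ≤ q) :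
    cubeSum (dyadicLevel d n) J q ≤ 2 ^ (n * d) * J (unitCube d) ^ q := by
  rw [cubeSum_eq]
  have hM := M_pos hmono hP
  calc ∑ Q ∈ levelFinset d n, (if J Q = 0 then 0 else J Q ^ q)
      ≤ ∑ _Q ∈ levelFinset d n, J (unitCube d) ^ q := by
        refine Finset.sum_le_sum fun R hR => ?_
        by_cases h : J R = 0
        · simp only [if_pos h]; positivity
        · simp only [if_neg h]
          exact Real.rpow_le_rpow (J_nonneg hnn (mem_levelFinset.1 hR))
            (J_le_M hmono (mem_levelFinset.1 hR)) hq
  _ = (levelFinset d n).card * J (unitCube d) ^ q := by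
        rw [Finset.sum_const, nsmul_eq_mul]
  _ ≤ 2 ^ (n * d) * J (unitCube d) ^ q := by
        have : ((levelFinset d n).card : ℝ) ≤ 2 ^ (n * d) := by
          exact_mod_cast card_levelFinset_le d n
        exact mul_le_mul_of_nonneg_right this (by positivity)

end
end
end S2
namespace S2

/-- real version of `tauApprox` -/
def tR (d : ℕ) (J : Set (Fin d → ℝ) → ℝ) (n : ℕ) (q : ℝ) : ℝ :=
  Real.log (cubeSum (dyadicLevel d n) J q) * (((n : ℝ) * Real.log 2)⁻¹)

/-- real version of the sequence defining `dimInfty` -/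
def aS (d : ℕ) (J : Set (Fin d → ℝ) → ℝ) (n : ℕ) : ℝ :=
  Real.log (maxJ (dyadicLevel d) J n) * (-(((n : ℝ) * Real.log 2)⁻¹))

section
variable {d : ℕ} {J : Set (Fin d → ℝ) → ℝ}
variable (hnn : CubeNonneg J) (hmono : CubeMonotone J)
  (hP : ∀ n, ∃ Q ∈ dyadicLevel d n, 0 < J Q)

lemma elog_pos_eq {x : ℝ} (hx : 0 < x) : elog x = ((Real.log x : ℝ) : EReal) := by
  rw [elog, if_neg (not_le.2 hx)]

include hnn hmono hP in
lemma tauApprox_eq (n : ℕ) (q : ℝ) :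
    tauApprox (dyadicLevel d) J n q = ((tR d J n q : ℝ) : EReal) := by
  rw [tauApprox, elog_pos_eq (S_pos hnn hmono hP n q), ← EReal.coe_mul, tR]

include hnn hmono hP in
lemma tauFn_eq (q : ℝ) :
    tauFn (dyadicLevel d) J q = Filter.limsup (fun n => ((tR d J n q : ℝ) : EReal)) Filter.atTop := by
  rw [tauFn]
  congr 1
  funext n
  exact tauApprox_eq hnn hmono hP n q

include hP in
lemma dimInfty_eq :
    dimInfty (dyadicLevel d) J = Filter.liminf (fun n => ((aS d J n : ℝ) : EReal)) Filter.atTop := by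
  rw [dimInfty]
  congr 1
  funext n
  rw [elog_pos_eq (maxJ_pos hP n), ← EReal.coe_mul, aS]

lemma inv_nonneg' (n : ℕ) : 0 ≤ (((n : ℝ) * Real.log 2)⁻¹) := by
  have := Real.log_pos (by norm_num : (1:ℝ) < 2)
  positivity

-- E2 : lower bound on `tR`
include hnn hmono hP in
lemma tR_ge (n : ℕ) {q : ℝ} (hq : 0 ≤ q) : -(q * aS d J n) ≤ tR d J n q := by
  have h1 : q * Real.log (maxJ (dyadicLevel d) J n) ≤ Real.log (cubeSum (dyadicLevel d n) J q) := by
    rw [← Real.log_rpow (maxJ_pos hP n)]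
    exact Real.log_le_log (Real.rpow_pos_of_pos (maxJ_pos hP n) q) (S_ge hnn hP n q)
  have h2 := inv_nonneg' n
  have := mul_le_mul_of_nonneg_right h1 h2
  rw [tR, aS]
  nlinarith [this]

-- E4 : decrease estimate
include hnn hmono hP in
lemma tR_dec (n : ℕ) {q q' : ℝ} (hq : 0 ≤ q) (hqq : q ≤ q') :
    tR d J n q' ≤ tR d J n q - (q' - q) * aS d J n := by
  set mx := maxJ (dyadicLevel d) J n with hmx
  have hmpos := maxJ_pos hP n
  have hSle : cubeSum (dyadicLevel d n) J q' ≤ mx ^ (q' - q) * cubeSum (dyadicLevel d n) J q := by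
    rw [cubeSum_eq, cubeSum_eq, Finset.mul_sum]
    refine Finset.sum_le_sum fun R hR => ?_
    by_cases h : J R = 0
    · simp [h]
    · have hJR : 0 < J R := lt_of_le_of_ne (J_nonneg hnn (mem_levelFinset.1 hR)) (Ne.symm h)
      simp only [if_neg h]
      calc J R ^ q' = J R ^ (q' - q) * J R ^ q := by
            rw [← Real.rpow_add hJR]; ring_nf
      _ ≤ mx ^ (q' - q) * J R ^ q := by
            apply mul_le_mul_of_nonneg_right
              (Real.rpow_le_rpow hJR.le (le_maxJ (mem_levelFinset.1 hR)) (by linarith))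
            positivity
  have hlog : Real.log (cubeSum (dyadicLevel d n) J q')
      ≤ (q' - q) * Real.log mx + Real.log (cubeSum (dyadicLevel d n) J q) := by
    calc Real.log (cubeSum (dyadicLevel d n) J q')
        ≤ Real.log (mx ^ (q' - q) * cubeSum (dyadicLevel d n) J q) :=
          Real.log_le_log (S_pos hnn hmono hP n q') hSle
    _ = (q' - q) * Real.log mx + Real.log (cubeSum (dyadicLevel d n) J q) := by
          rw [Real.log_mul (by positivity) (ne_of_gt (S_pos hnn hmono hP n q)),
            Real.log_rpow hmpos]
  have h2 := inv_nonneg' n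
  have := mul_le_mul_of_nonneg_right hlog h2
  rw [tR, tR, aS]
  nlinarith [this]

-- E1 : eventual upper bound `tR n q ≤ d + 1`
include hnn hmono hP in
lemma tR_ev_le {q : ℝ} (hq : 0 ≤ q) :
    ∀ᶠ n in Filter.atTop, tR d J n q ≤ d + 1 := by
  set M := J (unitCube d) with hM
  have hMpos := M_pos hmono hP
  have hl2 := Real.log_pos (by norm_num : (1:ℝ) < 2)
  set c := |q * Real.log M| with hc
  refine Filter.eventually_atTop.2 ⟨⌈c / Real.log 2⌉₊ + 1, fun n hn => ?_⟩
  have hn1 : 1 ≤ n := le_trans (Nat.le_add_left 1 _) hn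
  have hnR : (1:ℝ) ≤ (n:ℝ) := by exact_mod_cast hn1
  have hnc : c ≤ (n:ℝ) * Real.log 2 := by
    have h1 : c / Real.log 2 ≤ ⌈c / Real.log 2⌉₊ := Nat.le_ceil _
    have h2 : (⌈c / Real.log 2⌉₊ : ℝ) ≤ (n:ℝ) := by
      have : (⌈c / Real.log 2⌉₊ : ℕ) ≤ n := by omega
      exact_mod_cast this
    rw [div_le_iff₀ hl2] at h1
    nlinarith
  have hlog : Real.log (cubeSum (dyadicLevel d n) J q)
      ≤ (n * d : ℝ) * Real.log 2 + q * Real.log M := by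
    calc Real.log (cubeSum (dyadicLevel d n) J q)
        ≤ Real.log (2 ^ (n * d) * M ^ q) :=
          Real.log_le_log (S_pos hnn hmono hP n q) (S_le hnn hmono hP n hq)
    _ = (n * d : ℝ) * Real.log 2 + q * Real.log M := by
          rw [Real.log_mul (by positivity) (by positivity), Real.log_pow, Real.log_rpow hMpos]
          push_cast; ring
  have hinv : 0 < ((n:ℝ) * Real.log 2) := by nlinarith
  rw [tR]
  have : Real.log (cubeSum (dyadicLevel d n) J q) * ((n:ℝ) * Real.log 2)⁻¹
      ≤ ((n * d : ℝ) * Real.log 2 + q * Real.log M) * ((n:ℝ) * Real.log 2)⁻¹ :=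
    mul_le_mul_of_nonneg_right hlog (inv_nonneg' n)
  refine this.trans ?_
  rw [add_mul]
  have e1 : (n * d : ℝ) * Real.log 2 * ((n:ℝ) * Real.log 2)⁻¹ = d := by
    field_simp
  have e2 : q * Real.log M * ((n:ℝ) * Real.log 2)⁻¹ ≤ 1 := by
    calc q * Real.log M * ((n:ℝ) * Real.log 2)⁻¹ ≤ c * ((n:ℝ) * Real.log 2)⁻¹ := by
          apply mul_le_mul_of_nonneg_right (le_abs_self _) (inv_nonneg' n)
    _ ≤ ((n:ℝ) * Real.log 2) * ((n:ℝ) * Real.log 2)⁻¹ :=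
          mul_le_mul_of_nonneg_right hnc (inv_nonneg' n)
    _ = 1 := mul_inv_cancel₀ (ne_of_gt hinv)
  rw [e1]
  linarith

end
end S2
namespace S2

section
variable {d : ℕ} {J : Set (Fin d → ℝ) → ℝ}
variable (hnn : CubeNonneg J) (hmono : CubeMonotone J)
  (hP : ∀ n, ∃ Q ∈ dyadicLevel d n, 0 < J Q)

include hnn in
lemma cubeSum_filter (n : ℕ) (q : ℝ) :
    cubeSum (dyadicLevel d n) J q
      = ∑ Q ∈ (levelFinset d n).filter (fun Q => J Q ≠ 0), J Q ^ q := by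
  rw [cubeSum_eq, Finset.sum_filter]
  refine Finset.sum_congr rfl fun R _ => ?_
  by_cases h : J R = 0 <;> simp [h]

-- Hölder inequality for the partition sums
include hnn hmono hP in
lemma S_holder (n : ℕ) {q1 q2 a b : ℝ} (hq1 : 0 ≤ q1) (hq2 : 0 ≤ q2)
    (ha : 0 ≤ a) (hb : 0 ≤ b) (hab : a + b = 1) :
    cubeSum (dyadicLevel d n) J (a * q1 + b * q2)
      ≤ cubeSum (dyadicLevel d n) J q1 ^ a * cubeSum (dyadicLevel d n) J q2 ^ b := by
  set F := (levelFinset d n).filter (fun Q => J Q ≠ 0) with hF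
  set S1 := cubeSum (dyadicLevel d n) J q1 with hS1
  set S2 := cubeSum (dyadicLevel d n) J q2 with hS2
  have hS1pos : 0 < S1 := S_pos hnn hmono hP n q1
  have hS2pos : 0 < S2 := S_pos hnn hmono hP n q2
  have hJpos : ∀ Q ∈ F, 0 < J Q := fun Q hQ => by
    have h1 := (Finset.mem_filter.1 hQ).2
    have h2 := J_nonneg hnn (mem_levelFinset.1 (Finset.mem_filter.1 hQ).1)
    exact lt_of_le_of_ne h2 (Ne.symm h1)
  have key : ∀ Q ∈ F, J Q ^ (a * q1 + b * q2)
      ≤ S1 ^ a * S2 ^ b * (a * (J Q ^ q1 / S1) + b * (J Q ^ q2 / S2)) := by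
    intro Q hQ
    have hJ := hJpos Q hQ
    have e1 : J Q ^ (a * q1 + b * q2) = (J Q ^ q1) ^ a * (J Q ^ q2) ^ b := by
      rw [Real.rpow_add hJ, mul_comm a q1, mul_comm b q2,
        Real.rpow_mul hJ.le, Real.rpow_mul hJ.le]
    have e2 : (J Q ^ q1) ^ a * (J Q ^ q2) ^ b
        = S1 ^ a * S2 ^ b * ((J Q ^ q1 / S1) ^ a * (J Q ^ q2 / S2) ^ b) := by
      rw [Real.div_rpow (by positivity) hS1pos.le, Real.div_rpow (by positivity) hS2pos.le]
      field_simp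
    have e3 : (J Q ^ q1 / S1) ^ a * (J Q ^ q2 / S2) ^ b
        ≤ a * (J Q ^ q1 / S1) + b * (J Q ^ q2 / S2) :=
      Real.geom_mean_le_arith_mean2_weighted ha hb (by positivity) (by positivity) hab
    rw [e1, e2]
    exact mul_le_mul_of_nonneg_left e3 (by positivity)
  calc cubeSum (dyadicLevel d n) J (a * q1 + b * q2)
      = ∑ Q ∈ F, J Q ^ (a * q1 + b * q2) := cubeSum_filter hnn n _
  _ ≤ ∑ Q ∈ F, S1 ^ a * S2 ^ b * (a * (J Q ^ q1 / S1) + b * (J Q ^ q2 / S2)) :=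
      Finset.sum_le_sum key
  _ = S1 ^ a * S2 ^ b * (a * ((∑ Q ∈ F, J Q ^ q1) / S1) + b * ((∑ Q ∈ F, J Q ^ q2) / S2)) := by
      simp only [mul_add, Finset.sum_add_distrib, Finset.sum_div, Finset.mul_sum]
  _ = S1 ^ a * S2 ^ b := by
      rw [← cubeSum_filter hnn n q1, ← cubeSum_filter hnn n q2, ← hS1, ← hS2,
        div_self (ne_of_gt hS1pos), div_self (ne_of_gt hS2pos)]
      rw [mul_one, mul_one, hab, mul_one]

-- E3 : convexity inequality at each level
include hnn hmono hP in
lemma tR_convex (n : ℕ) {q1 q2 a b : ℝ} (hq1 : 0 ≤ q1) (hq2 : 0 ≤ q2)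
    (ha : 0 ≤ a) (hb : 0 ≤ b) (hab : a + b = 1) :
    tR d J n (a * q1 + b * q2) ≤ a * tR d J n q1 + b * tR d J n q2 := by
  have hlog : Real.log (cubeSum (dyadicLevel d n) J (a * q1 + b * q2))
      ≤ a * Real.log (cubeSum (dyadicLevel d n) J q1)
        + b * Real.log (cubeSum (dyadicLevel d n) J q2) := by
    calc Real.log (cubeSum (dyadicLevel d n) J (a * q1 + b * q2))
        ≤ Real.log (cubeSum (dyadicLevel d n) J q1 ^ a * cubeSum (dyadicLevel d n) J q2 ^ b) :=
          Real.log_le_log (S_pos hnn hmono hP n _) (S_holder hnn hmono hP n hq1 hq2 ha hb hab)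
    _ = a * Real.log (cubeSum (dyadicLevel d n) J q1)
        + b * Real.log (cubeSum (dyadicLevel d n) J q2) := by
        rw [Real.log_mul (ne_of_gt (Real.rpow_pos_of_pos (S_pos hnn hmono hP n q1) a))
            (ne_of_gt (Real.rpow_pos_of_pos (S_pos hnn hmono hP n q2) b)),
          Real.log_rpow (S_pos hnn hmono hP n q1), Real.log_rpow (S_pos hnn hmono hP n q2)]
  have := mul_le_mul_of_nonneg_right hlog (inv_nonneg' n)
  rw [tR, tR, tR]
  nlinarith [this]

end
end S2
namespace S2

section
variable {d : ℕ} {J : Set (Fin d → ℝ) → ℝ}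
variable (hnn : CubeNonneg J) (hmono : CubeMonotone J)
  (hP : ∀ n, ∃ Q ∈ dyadicLevel d n, 0 < J Q)
  (hdim0 : 0 < dimInfty (dyadicLevel d) J) (hdim1 : dimInfty (dyadicLevel d) J < ⊤)

include hnn hmono hP in
lemma tau_le_of_ev {q c : ℝ} (h : ∀ᶠ n in Filter.atTop, tR d J n q ≤ c) :
    tauFn (dyadicLevel d) J q ≤ (c : EReal) := by
  rw [tauFn_eq hnn hmono hP]
  exact Filter.limsup_le_of_le (by isBoundedDefault)
    (h.mono fun n hn => EReal.coe_le_coe_iff.2 hn)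

include hnn hmono hP in
lemma tau_ne_top {q : ℝ} (hq : 0 ≤ q) : tauFn (dyadicLevel d) J q ≠ ⊤ := by
  have h := tau_le_of_ev hnn hmono hP (tR_ev_le hnn hmono hP hq)
  exact ne_top_of_le_ne_top (EReal.coe_ne_top _) h

include hnn hmono hP hdim0 hdim1 in
lemma tau_ne_bot {q : ℝ} (hq : 0 ≤ q) : tauFn (dyadicLevel d) J q ≠ ⊥ := by
  have hne_bot : dimInfty (dyadicLevel d) J ≠ ⊥ := fun h => by simp [h] at hdim0
  set B := (dimInfty (dyadicLevel d) J).toReal + 1 with hB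
  have hlt : dimInfty (dyadicLevel d) J < (B : EReal) := by
    calc dimInfty (dyadicLevel d) J
        = (((dimInfty (dyadicLevel d) J).toReal : ℝ) : EReal) :=
          (EReal.coe_toReal hdim1.ne hne_bot).symm
    _ < (B : EReal) := EReal.coe_lt_coe_iff.2 (lt_add_one _)
  rw [dimInfty_eq hP] at hlt
  have hfreq := Filter.frequently_lt_of_liminf_lt (by isBoundedDefault) hlt
  have hfreq2 : ∃ᶠ n in Filter.atTop,
      ((-(q * B) : ℝ) : EReal) ≤ ((tR d J n q : ℝ) : EReal) := by
    refine hfreq.mono fun n hn => ?_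
    have haB : aS d J n < B := EReal.coe_lt_coe_iff.1 hn
    have h1 : -(q * B) ≤ -(q * aS d J n) := by nlinarith
    exact EReal.coe_le_coe_iff.2 (h1.trans (tR_ge hnn hmono hP n hq))
  have h2 := Filter.le_limsup_of_frequently_le hfreq2 (by isBoundedDefault)
  rw [← tauFn_eq hnn hmono hP q] at h2
  intro hbot
  rw [hbot, le_bot_iff] at h2
  exact EReal.coe_ne_bot _ h2

include hnn hmono hP hdim0 hdim1 in
lemma tau_eq_coe {q : ℝ} (hq : 0 ≤ q) :
    tauFn (dyadicLevel d) J q = (((tauFn (dyadicLevel d) J q).toReal : ℝ) : EReal) :=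
  (EReal.coe_toReal (tau_ne_top hnn hmono hP hq) (tau_ne_bot hnn hmono hP hdim0 hdim1 hq)).symm

include hnn hmono hP hdim0 hdim1 in
lemma tR_ev_lt {q : ℝ} (hq : 0 ≤ q) {ε : ℝ} (hε : 0 < ε) :
    ∀ᶠ n in Filter.atTop, tR d J n q < (tauFn (dyadicLevel d) J q).toReal + ε := by
  set c := (tauFn (dyadicLevel d) J q).toReal + ε with hc
  have h1 : tauFn (dyadicLevel d) J q < ((c : ℝ) : EReal) := by
    nth_rewrite 1 [tau_eq_coe hnn hmono hP hdim0 hdim1 hq]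
    exact EReal.coe_lt_coe_iff.2 (by rw [hc]; linarith)
  rw [tauFn_eq hnn hmono hP] at h1
  have h2 := Filter.eventually_lt_of_limsup_lt h1 (by isBoundedDefault)
  exact h2.mono fun n hn => EReal.coe_lt_coe_iff.1 hn

include hnn hmono hP hdim0 hdim1 in
lemma Tr_le_of_ev {q c : ℝ} (hq : 0 ≤ q) (h : ∀ᶠ n in Filter.atTop, tR d J n q ≤ c) :
    (tauFn (dyadicLevel d) J q).toReal ≤ c := by
  have := tau_le_of_ev hnn hmono hP h
  have h2 := EReal.toReal_le_toReal this (tau_ne_bot hnn hmono hP hdim0 hdim1 hq)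
    (EReal.coe_ne_top c)
  simpa using h2

include hnn hmono hP hdim0 hdim1 in
lemma Tr_convexOn :
    ConvexOn ℝ (Set.Ici (0 : ℝ)) (fun q => (tauFn (dyadicLevel d) J q).toReal) := by
  refine ⟨convex_Ici 0, fun q1 hq1 q2 hq2 a b ha hb hab => ?_⟩
  simp only [smul_eq_mul]
  set T := fun q => (tauFn (dyadicLevel d) J q).toReal with hT
  refine le_of_forall_pos_le_add fun ε hε => ?_
  have hm : (0:ℝ) ≤ a * q1 + b * q2 := by
    have := Set.mem_Ici.1 hq1; have := Set.mem_Ici.1 hq2; positivity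
  have ev1 := tR_ev_lt hnn hmono hP hdim0 hdim1 (Set.mem_Ici.1 hq1) hε
  have ev2 := tR_ev_lt hnn hmono hP hdim0 hdim1 (Set.mem_Ici.1 hq2) hε
  have hev : ∀ᶠ n in Filter.atTop, tR d J n (a * q1 + b * q2) ≤ a * T q1 + b * T q2 + ε := by
    filter_upwards [ev1, ev2] with n h1 h2
    calc tR d J n (a * q1 + b * q2) ≤ a * tR d J n q1 + b * tR d J n q2 :=
          tR_convex hnn hmono hP n (Set.mem_Ici.1 hq1) (Set.mem_Ici.1 hq2) ha hb hab
    _ ≤ a * (T q1 + ε) + b * (T q2 + ε) := by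
          have := mul_le_mul_of_nonneg_left h1.le ha
          have := mul_le_mul_of_nonneg_left h2.le hb
          nlinarith
    _ = a * T q1 + b * T q2 + ε := by nlinarith [hab]
  exact Tr_le_of_ev hnn hmono hP hdim0 hdim1 hm hev

include hnn hmono hP hdim0 hdim1 in
lemma Tr_dec {q q' : ℝ} (hq : 0 ≤ q) (hlt : q < q') :
    (tauFn (dyadicLevel d) J q').toReal
      ≤ (tauFn (dyadicLevel d) J q).toReal - (q' - q) * (dimInfty (dyadicLevel d) J).toReal := by
  set T := fun r => (tauFn (dyadicLevel d) J r).toReal with hT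
  set D := (dimInfty (dyadicLevel d) J).toReal with hD
  have hne_bot : dimInfty (dyadicLevel d) J ≠ ⊥ := fun h => by simp [h] at hdim0
  have hq' : 0 ≤ q' := hq.trans hlt.le
  have key : ∀ ε : ℝ, 0 < ε → T q' ≤ T q - (q' - q) * D + ε * (1 + (q' - q)) := by
    intro ε hε
    have hDe : ((D - ε : ℝ) : EReal) < dimInfty (dyadicLevel d) J := by
      calc ((D - ε : ℝ) : EReal) < (D : EReal) := EReal.coe_lt_coe_iff.2 (by linarith)
      _ = dimInfty (dyadicLevel d) J := EReal.coe_toReal hdim1.ne hne_bot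
    rw [dimInfty_eq hP] at hDe
    have evA := Filter.eventually_lt_of_lt_liminf hDe (by isBoundedDefault)
    have evT := tR_ev_lt hnn hmono hP hdim0 hdim1 hq hε
    have hev : ∀ᶠ n in Filter.atTop,
        tR d J n q' ≤ T q - (q' - q) * D + ε * (1 + (q' - q)) := by
      filter_upwards [evA, evT] with n h1 h2
      have haS : D - ε < aS d J n := EReal.coe_lt_coe_iff.1 h1
      have h3 := tR_dec hnn hmono hP n hq hlt.le
      have h4 : -(q' - q) * aS d J n ≤ -(q' - q) * (D - ε) := by nlinarith
      nlinarith
    exact Tr_le_of_ev hnn hmono hP hdim0 hdim1 hq' hev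
  refine le_of_forall_pos_le_add fun ε0 hε0 => ?_
  have hpos1 : 0 < 1 + (q' - q) := by linarith
  have h1 := key (ε0 / (1 + (q' - q))) (div_pos hε0 hpos1)
  have h2 : (ε0 / (1 + (q' - q))) * (1 + (q' - q)) = ε0 := div_mul_cancel₀ _ (ne_of_gt hpos1)
  linarith [h1, h2.le, h2.ge]

include hnn hmono hP hdim0 hdim1 in
lemma Tr_strictAnti :
    StrictAntiOn (fun q => (tauFn (dyadicLevel d) J q).toReal) (Set.Ici (0 : ℝ)) := by
  intro q hq q' hq' hlt
  have hD : 0 < (dimInfty (dyadicLevel d) J).toReal := by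
    have hne_bot : dimInfty (dyadicLevel d) J ≠ ⊥ := fun h => by simp [h] at hdim0
    have : ((0:ℝ) : EReal) < (((dimInfty (dyadicLevel d) J).toReal : ℝ) : EReal) := by
      rw [EReal.coe_toReal hdim1.ne hne_bot, EReal.coe_zero]
      exact hdim0
    exact_mod_cast this
  have := Tr_dec hnn hmono hP hdim0 hdim1 (Set.mem_Ici.1 hq) hlt
  have : (q' - q) * (dimInfty (dyadicLevel d) J).toReal > 0 := by
    have : 0 < q' - q := by linarith
    positivity
  simp only
  linarith [Tr_dec hnn hmono hP hdim0 hdim1 (Set.mem_Ici.1 hq) hlt]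

end
end S2
set_option maxHeartbeats 1000000 in
/-- If `𝔍` is monotone, locally non-vanishing, positive on some cube, and
`dim_∞(𝔍) ∈ (0,∞)`, then `τ_𝔍` is finite (real-valued), convex and strictly decreasing on
`[0,∞)`; in particular, if `q_𝔍 > 0` then `q_𝔍` is the unique zero of `τ_𝔍` on `[0,∞)`. -/
theorem statement2 (d : ℕ) (hd : 2 ≤ d) (J : Set (Fin d → ℝ) → ℝ)
    (hnn : CubeNonneg J) (hmono : CubeMonotone J) (hloc : LocallyNonVanishing J)
    (hpos : ∃ Q ∈ dyadicFamily d, 0 < J Q)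
    (hdim0 : 0 < dimInfty (dyadicLevel d) J) (hdim1 : dimInfty (dyadicLevel d) J < ⊤) :
    (∀ q : ℝ, 0 ≤ q → tauFn (dyadicLevel d) J q ≠ ⊥ ∧ tauFn (dyadicLevel d) J q ≠ ⊤) ∧
    ConvexOn ℝ (Set.Ici (0 : ℝ)) (fun q => (tauFn (dyadicLevel d) J q).toReal) ∧
    StrictAntiOn (fun q => (tauFn (dyadicLevel d) J q).toReal) (Set.Ici (0 : ℝ)) ∧
    (0 < qCrit (dyadicLevel d) J →
      ∀ q : ℝ, 0 ≤ q →
        (tauFn (dyadicLevel d) J q = 0 ↔ (q : EReal) = qCrit (dyadicLevel d) J)) := by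

  classical
  have hd0 : 0 < d := by omega
  have hP : ∀ n, ∃ Q ∈ dyadicLevel d n, 0 < J Q := S2.pos_at_level hd0 hmono hloc hpos
  have hfin : ∀ q : ℝ, 0 ≤ q →
      tauFn (dyadicLevel d) J q ≠ ⊥ ∧ tauFn (dyadicLevel d) J q ≠ ⊤ := fun q hq =>
    ⟨S2.tau_ne_bot hnn hmono hP hdim0 hdim1 hq, S2.tau_ne_top hnn hmono hP hq⟩
  have hconv := S2.Tr_convexOn hnn hmono hP hdim0 hdim1
  have hanti := S2.Tr_strictAnti hnn hmono hP hdim0 hdim1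
  refine ⟨hfin, hconv, hanti, ?_⟩
  intro hqc q hq
  set T := fun r : ℝ => (tauFn (dyadicLevel d) J r).toReal with hT
  set D := (dimInfty (dyadicLevel d) J).toReal with hDdef
  have hdim_ne_bot : dimInfty (dyadicLevel d) J ≠ ⊥ := fun h => by simp [h] at hdim0
  have hD : 0 < D := by
    have h1 : ((0:ℝ) : EReal) < ((D : ℝ) : EReal) := by
      rw [hDdef, EReal.coe_toReal hdim1.ne hdim_ne_bot, EReal.coe_zero]
      exact hdim0
    exact_mod_cast h1
  have hcoe : ∀ r : ℝ, 0 ≤ r → tauFn (dyadicLevel d) J r = ((T r : ℝ) : EReal) := fun r hr =>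
    S2.tau_eq_coe hnn hmono hP hdim0 hdim1 hr
  have hltiff : ∀ r : ℝ, 0 ≤ r → (tauFn (dyadicLevel d) J r < 0 ↔ T r < 0) := by
    intro r hr
    rw [hcoe r hr, ← EReal.coe_zero, EReal.coe_lt_coe_iff]
  set S : Set EReal :=
    {x : EReal | ∃ r : ℝ, 0 ≤ r ∧ x = (r : EReal) ∧ tauFn (dyadicLevel d) J r < 0} with hSdef
  have hq_def : qCrit (dyadicLevel d) J = sInf S := rfl
  -- S is nonempty
  set mx0 : ℝ := max 0 (T 0 / D) with hmx0
  set qstar : ℝ := mx0 + 1 with hqstar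
  have hqstar_pos : 0 < qstar := by
    have : (0:ℝ) ≤ mx0 := le_max_left _ _
    linarith
  have hTqstar : T qstar < 0 := by
    have h1 := S2.Tr_dec hnn hmono hP hdim0 hdim1 (le_refl (0:ℝ)) hqstar_pos
    have h2 : T 0 / D ≤ mx0 := le_max_right _ _
    have h3 : (T 0 / D) * D = T 0 := div_mul_cancel₀ _ (ne_of_gt hD)
    have h4 : T 0 ≤ mx0 * D := by nlinarith
    have h5 : qstar * D = mx0 * D + D := by rw [hqstar]; ring
    simp only [← hT, ← hDdef, sub_zero] at h1
    nlinarith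
  have hmemS : ((qstar : ℝ) : EReal) ∈ S :=
    ⟨qstar, hqstar_pos.le, rfl, (hltiff _ hqstar_pos.le).2 hTqstar⟩
  have hle : qCrit (dyadicLevel d) J ≤ ((qstar : ℝ) : EReal) := by
    rw [hq_def]; exact sInf_le hmemS
  have hge0 : (0 : EReal) ≤ qCrit (dyadicLevel d) J := by
    rw [hq_def]
    refine le_sInf ?_
    rintro x ⟨r, hr0, rfl, _⟩
    exact_mod_cast hr0
  have hne_top : qCrit (dyadicLevel d) J ≠ ⊤ := ne_top_of_le_ne_top (EReal.coe_ne_top _) hle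
  have hne_bot : qCrit (dyadicLevel d) J ≠ ⊥ := by
    intro h
    rw [h, le_bot_iff] at hge0
    simp at hge0
  set qr : ℝ := (qCrit (dyadicLevel d) J).toReal with hqrdef
  have hqr_coe : ((qr : ℝ) : EReal) = qCrit (dyadicLevel d) J := EReal.coe_toReal hne_top hne_bot
  have hqr_pos : 0 < qr := by
    have h1 : ((0:ℝ) : EReal) < ((qr : ℝ) : EReal) := by
      rw [hqr_coe, EReal.coe_zero]; exact hqc
    exact_mod_cast h1
  -- Claim A : below qr, T is nonnegative
  have claimA : ∀ r : ℝ, 0 ≤ r → r < qr → 0 ≤ T r := by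
    intro r hr hrlt
    by_contra hneg
    push_neg at hneg
    have hmem : ((r : ℝ) : EReal) ∈ S := ⟨r, hr, rfl, (hltiff r hr).2 hneg⟩
    have h1 : qCrit (dyadicLevel d) J ≤ ((r : ℝ) : EReal) := by
      rw [hq_def]; exact sInf_le hmem
    rw [← hqr_coe] at h1
    exact absurd (EReal.coe_le_coe_iff.1 h1) (not_le.2 hrlt)
  -- Claim B : above qr, T is negative
  have claimB : ∀ r : ℝ, qr < r → T r < 0 := by
    intro r hrlt
    have h1 : qCrit (dyadicLevel d) J < ((r : ℝ) : EReal) := by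
      rw [← hqr_coe]; exact_mod_cast hrlt
    rw [hq_def] at h1
    obtain ⟨x, hxS, hxlt⟩ := sInf_lt_iff.1 h1
    obtain ⟨r', hr'0, rfl, hr'neg⟩ := hxS
    have hr'r : r' < r := EReal.coe_lt_coe_iff.1 hxlt
    have hTr' : T r' < 0 := (hltiff r' hr'0).1 hr'neg
    have := hanti (Set.mem_Ici.2 hr'0) (Set.mem_Ici.2 (hr'0.trans hr'r.le)) hr'r
    linarith
  -- Claim C : T qr = 0
  have claimCle : T qr ≤ 0 := by
    refine le_of_forall_pos_le_add fun ε hε => ?_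
    set mx : ℝ := max (T 0) 0 with hmx
    have hmx0 : 0 ≤ mx := le_max_right _ _
    have hmx1 : T 0 ≤ mx := le_max_left _ _
    set δ : ℝ := (ε / (mx + 1)) * qr with hδ
    have hδpos : 0 < δ := by
      have : 0 < ε / (mx + 1) := by positivity
      exact mul_pos this hqr_pos
    set a : ℝ := δ / (qr + δ) with ha
    set b : ℝ := qr / (qr + δ) with hb
    have hqrδ : 0 < qr + δ := by linarith
    have ha0 : 0 ≤ a := by positivity
    have hb0 : 0 ≤ b := by positivity
    have hab : a + b = 1 := by
      rw [ha, hb, ← add_div, add_comm δ qr, div_self (ne_of_gt hqrδ)]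
    have harg : a * 0 + b * (qr + δ) = qr := by
      rw [hb]
      field_simp
      ring
    have hcx := hconv.2 (Set.mem_Ici.2 (le_refl (0:ℝ)))
      (Set.mem_Ici.2 (by linarith : (0:ℝ) ≤ qr + δ)) ha0 hb0 hab
    simp only [smul_eq_mul, ← hT] at hcx
    rw [harg] at hcx
    have hTneg : T (qr + δ) < 0 := claimB _ (by linarith)
    have h1 : b * T (qr + δ) ≤ 0 := mul_nonpos_of_nonneg_of_nonpos hb0 hTneg.le
    have h2 : a * T 0 ≤ a * mx := mul_le_mul_of_nonneg_left hmx1 ha0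
    have h3 : a ≤ ε / (mx + 1) := by
      have hstep : a ≤ δ / qr := by
        rw [ha]
        gcongr
        · linarith
      have heq : δ / qr = ε / (mx + 1) := by
        rw [hδ, mul_div_assoc, div_self (ne_of_gt hqr_pos), mul_one]
      linarith [hstep, heq.le, heq.ge]
    have h4 : a * mx ≤ ε := by
      have h5 : a * mx ≤ (ε / (mx + 1)) * mx := mul_le_mul_of_nonneg_right h3 hmx0
      have h6 : (ε / (mx + 1)) * mx ≤ ε := by
        rw [div_mul_eq_mul_div, div_le_iff₀ (by positivity : (0:ℝ) < mx + 1)]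
        nlinarith
      linarith
    linarith
  have claimCge : 0 ≤ T qr := by
    by_contra hneg
    push_neg at hneg
    set c : ℝ := -(T qr) with hc
    have hcpos : 0 < c := by rw [hc]; linarith
    set B1 : ℝ := T (qr / 2) with hB1
    have hB1nn : 0 ≤ B1 := claimA (qr / 2) (by linarith) (by linarith)
    set lam : ℝ := c / (2 * (B1 + c)) with hlam
    have hBc : 0 < B1 + c := by linarith
    have hlam_pos : 0 < lam := by positivity
    have hlam_eq : lam * (B1 + c) = c / 2 := by
      rw [hlam]
      field_simp
    have hlam_le : lam ≤ 1 / 2 := by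
      rw [hlam, div_le_div_iff₀ (by linarith) (by norm_num)]
      nlinarith
    set q'' : ℝ := lam * (qr / 2) + (1 - lam) * qr with hq''
    have hq''lt : q'' < qr := by
      have h := mul_pos hlam_pos hqr_pos
      rw [hq'']
      nlinarith
    have hq''nn : 0 ≤ q'' := by
      rw [hq'']
      exact add_nonneg (mul_nonneg hlam_pos.le (by linarith))
        (mul_nonneg (by linarith) hqr_pos.le)
    have hcx := hconv.2 (Set.mem_Ici.2 (by linarith : (0:ℝ) ≤ qr / 2))
      (Set.mem_Ici.2 (by linarith : (0:ℝ) ≤ qr)) hlam_pos.le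
      (by linarith : (0:ℝ) ≤ 1 - lam) (by ring)
    simp only [smul_eq_mul, ← hT] at hcx
    rw [← hq''] at hcx
    have h1 : 0 ≤ T q'' := claimA q'' hq''nn hq''lt
    have h2 : lam * B1 + (1 - lam) * T qr = lam * (B1 + c) - c := by
      rw [hc]; ring
    nlinarith
  have hTqr : T qr = 0 := le_antisymm claimCle claimCge
  constructor
  · intro h0
    have hTq : T q = 0 := by rw [hT]; simp only; rw [h0]; exact EReal.toReal_zero
    have hqeq : q = qr := by
      by_contra hne
      rcases lt_or_gt_of_ne hne with h | h
      · have := hanti (Set.mem_Ici.2 hq) (Set.mem_Ici.2 (by linarith : (0:ℝ) ≤ qr)) h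
        rw [hTq, hTqr] at this
        exact lt_irrefl 0 this
      · have := hanti (Set.mem_Ici.2 (by linarith : (0:ℝ) ≤ qr)) (Set.mem_Ici.2 hq) h
        rw [hTq, hTqr] at this
        exact lt_irrefl 0 this
    rw [hqeq, hqr_coe]
  · intro heq
    have hqeq : q = qr := by
      have : ((q : ℝ) : EReal) = ((qr : ℝ) : EReal) := by rw [hqr_coe]; exact heq
      exact_mod_cast this
    rw [hqeq, hcoe qr hqr_pos.le, hTqr, EReal.coe_zero]
end
end

section
/- Let d = 2 and let ν be a non-zero finite Borel measure on 𝒬 with dim_∞(ν) > 0. Then for all b > 0 and all q ≥ 0, τ_{𝔍_{ν,0,b}}(q) = β_ν(bq). If in addition β_ν(bq) exists as a limit (i.e., the sequence τ_{ν,n}(bq) converges), then also β_ν(bq) = liminf_{n→∞} τ_{𝔍_{ν,0,b},n}(q). -/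
open MeasureTheory Filter Set Topology Classical

noncomputable section

namespace S4

open Real MeasureTheory Filter

lemma log2_pos : (0:ℝ) < Real.log 2 := Real.log_pos (by norm_num)

lemma mem_family {n : ℕ} {Q : Set (Fin 2 → ℝ)} (h : Q ∈ dyadicLevel 2 n) :
    Q ∈ dyadicFamily 2 := Set.mem_iUnion.2 ⟨n, h⟩

lemma level_subset_image (n : ℕ) :
    dyadicLevel 2 n ⊆
      (fun f : Fin 2 → Fin (2^n) => dyadicCube 2 n (fun i => (f i : ℕ))) '' Set.univ := by
  rintro Q ⟨k, hk, rfl⟩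
  exact ⟨fun i => ⟨k i, hk i⟩, trivial, rfl⟩

lemma level_finite (n : ℕ) : (dyadicLevel 2 n).Finite :=
  (Set.finite_univ.image _).subset (level_subset_image n)

lemma ncard_level_le (n : ℕ) : (dyadicLevel 2 n).ncard ≤ 4 ^ n := by
  have h1 := Set.ncard_le_ncard (level_subset_image n) (Set.finite_univ.image _)
  have h2 := Set.ncard_image_le (s := (Set.univ : Set (Fin 2 → Fin (2^n))))
    (f := fun f => dyadicCube 2 n (fun i => (f i : ℕ))) Set.finite_univ
  have h3 : (Set.univ : Set (Fin 2 → Fin (2^n))).ncard = (2^n)^2 := by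
    rw [Set.ncard_univ, Nat.card_eq_fintype_card, Fintype.card_fun]
    simp
  have h4 : (2^n)^2 = 4^n := by rw [← pow_mul, mul_comm, pow_mul]; norm_num
  exact h4 ▸ h3 ▸ (h1.trans h2)

lemma volume_cube (n : ℕ) (k : Fin 2 → ℕ) :
    (volume (dyadicCube 2 n k)).toReal = (((2:ℝ)^n)⁻¹)^2 := by
  have hpi : dyadicCube 2 n k =
      Set.pi Set.univ (fun i => Set.Ico ((k i : ℝ)/2^n) (((k i : ℝ)+1)/2^n)) := by
    ext x; simp [dyadicCube, Set.mem_pi]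
  rw [hpi, volume_pi_pi]
  have h1 : ∀ i : Fin 2, volume (Set.Ico ((k i : ℝ)/2^n) (((k i : ℝ)+1)/2^n))
      = ENNReal.ofReal (((2:ℝ)^n)⁻¹) := by
    intro i
    rw [Real.volume_Ico]
    congr 1
    field_simp
    ring
  rw [Finset.prod_congr rfl fun i _ => h1 i, Finset.prod_const]
  simp [ENNReal.toReal_pow, ENNReal.toReal_ofReal (by positivity : (0:ℝ) ≤ ((2:ℝ)^n)⁻¹)]

lemma abs_log_volume (n : ℕ) (k : Fin 2 → ℕ) :
    |Real.log (volume (dyadicCube 2 n k)).toReal| = 2 * n * Real.log 2 := by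
  rw [volume_cube, Real.log_pow, Real.log_inv, Real.log_pow]
  have h1 : ((2:ℕ):ℝ) * -(((n:ℕ):ℝ) * Real.log 2) ≤ 0 := by
    have := log2_pos
    have : (0:ℝ) ≤ (n:ℝ) * Real.log 2 := by positivity
    nlinarith
  rw [abs_of_nonpos h1]
  push_cast
  ring

lemma unit_subset (n : ℕ) : unitCube 2 ⊆ ⋃₀ dyadicLevel 2 n := by
  intro x hx
  have h2 : (0:ℝ) < 2^n := by positivity
  refine ⟨dyadicCube 2 n (fun i => ⌊x i * 2^n⌋₊), ⟨_, fun i => ?_, rfl⟩, fun i => ⟨?_, ?_⟩⟩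
  · rw [Nat.floor_lt (by nlinarith [(hx i).1])]
    push_cast
    nlinarith [(hx i).2]
  · rw [div_le_iff₀ h2]
    exact Nat.floor_le (by nlinarith [(hx i).1])
  · rw [lt_div_iff₀ h2]
    push_cast
    exact Nat.lt_floor_add_one _

variable (ν : Measure (Fin 2 → ℝ)) [IsFiniteMeasure ν]

lemma nuQ_pos (hν : ν ≠ 0) (hsupp : ν (unitCube 2)ᶜ = 0) : 0 < (ν (unitCube 2)).toReal := by
  have h1 : ν Set.univ ≤ ν (unitCube 2) := by
    have := measure_union_le (μ := ν) (unitCube 2) (unitCube 2)ᶜ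
    simpa [hsupp] using this
  have h2 : ν Set.univ ≠ 0 := fun h => hν (Measure.measure_univ_eq_zero.1 h)
  have h3 : ν (unitCube 2) ≠ 0 := by
    intro h
    rw [h, le_zero_iff] at h1
    exact h2 h1
  exact ENNReal.toReal_pos h3 (measure_ne_top ν _)

lemma exists_big (hν : ν ≠ 0) (hsupp : ν (unitCube 2)ᶜ = 0) (n : ℕ) :
    ∃ Q ∈ dyadicLevel 2 n, (ν (unitCube 2)).toReal / 4^n ≤ (ν Q).toReal := by
  classical
  set s := (level_finite n).toFinset with hs
  have hcov : ν (unitCube 2) ≤ ∑ Q ∈ s, ν Q := by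
    refine le_trans (measure_mono (unit_subset n))
      (le_trans (measure_mono ?_) (measure_biUnion_finset_le s id))
    rintro x ⟨Q, hQ, hxQ⟩
    exact Set.mem_biUnion ((level_finite n).mem_toFinset.2 hQ) hxQ
  have hne : (∑ Q ∈ s, ν Q) ≠ ⊤ := (ENNReal.sum_lt_top.2 fun Q _ => measure_lt_top ν Q).ne
  have hcovR : (ν (unitCube 2)).toReal ≤ ∑ Q ∈ s, (ν Q).toReal := by
    have := ENNReal.toReal_mono hne hcov
    rwa [ENNReal.toReal_sum (fun Q _ => measure_ne_top ν Q)] at this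
  have hpos := nuQ_pos ν hν hsupp
  have hsne : s.Nonempty := by
    rcases Finset.eq_empty_or_nonempty s with h | h
    · rw [h, Finset.sum_empty] at hcovR; linarith
    · exact h
  have hcard : (s.card : ℝ) ≤ 4^n := by
    have h1 := ncard_level_le n
    rw [Set.ncard_eq_toFinset_card _ (level_finite n)] at h1
    calc (s.card : ℝ) ≤ ((4^n : ℕ) : ℝ) := Nat.cast_le.2 h1
      _ = 4^n := by push_cast; ring
  have hsum : ∑ _Q ∈ s, ((ν (unitCube 2)).toReal / 4^n) ≤ ∑ Q ∈ s, (ν Q).toReal := by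
    refine le_trans ?_ hcovR
    rw [Finset.sum_const, nsmul_eq_mul]
    rw [div_eq_mul_inv]
    have h4 : (0:ℝ) < 4^n := by positivity
    calc (s.card : ℝ) * ((ν (unitCube 2)).toReal * (4^n)⁻¹)
        ≤ 4^n * ((ν (unitCube 2)).toReal * (4^n)⁻¹) := by
          apply mul_le_mul_of_nonneg_right hcard (by positivity)
      _ = (ν (unitCube 2)).toReal := by field_simp
  rcases Finset.exists_le_of_sum_le hsne hsum with ⟨Q, hQs, hQ⟩
  exact ⟨Q, (level_finite n).mem_toFinset.1 hQs, hQ⟩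

lemma bddAbove_nu_image (n : ℕ) : BddAbove (nuFn ν '' dyadicLevel 2 n) := by
  refine ⟨(ν Set.univ).toReal, ?_⟩
  rintro y ⟨Q, _, rfl⟩
  exact ENNReal.toReal_mono (measure_ne_top ν _) (measure_mono (Set.subset_univ _))

lemma le_maxJ {n : ℕ} {Q : Set (Fin 2 → ℝ)} (h : Q ∈ dyadicLevel 2 n) :
    nuFn ν Q ≤ maxJ (dyadicLevel 2) (nuFn ν) n :=
  le_csSup (bddAbove_nu_image ν n) ⟨Q, h, rfl⟩

lemma maxJ_pos (hν : ν ≠ 0) (hsupp : ν (unitCube 2)ᶜ = 0) (n : ℕ) :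
    0 < maxJ (dyadicLevel 2) (nuFn ν) n := by
  obtain ⟨Q, hQ, hge⟩ := exists_big ν hν hsupp n
  have h1 := le_maxJ ν hQ
  have hpos := nuQ_pos ν hν hsupp
  have h2 : (0:ℝ) < (ν (unitCube 2)).toReal / 4^n := by positivity
  have h3 : nuFn ν Q = (ν Q).toReal := rfl
  linarith [h1, hge, h3 ▸ h1]

lemma exists_decay (hν : ν ≠ 0) (hsupp : ν (unitCube 2)ᶜ = 0)
    (hdim : 0 < dimInfty (dyadicLevel 2) (nuFn ν)) :
    ∃ δ : ℝ, 0 < δ ∧ ∃ N : ℕ, 1 ≤ N ∧ ∀ n, N ≤ n → ∀ Q ∈ dyadicLevel 2 n,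
      (ν Q).toReal ≤ Real.exp (-(δ * n * Real.log 2)) := by
  rcases EReal.lt_iff_exists_real_btwn.1 hdim with ⟨δ, hδ0, hδ⟩
  have hδ0' : (0:ℝ) < δ := by exact_mod_cast hδ0
  have hev : ∀ᶠ n in atTop, (δ : EReal) <
      elog (maxJ (dyadicLevel 2) (nuFn ν) n) *
        (((-(((n : ℝ) * Real.log 2)⁻¹)) : ℝ) : EReal) :=
    eventually_lt_of_lt_liminf hδ
  rcases eventually_atTop.1 hev with ⟨N, hN⟩
  refine ⟨δ, hδ0', max N 1, le_max_right _ _, fun n hn Q hQ => ?_⟩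
  have hn1 : 1 ≤ n := le_trans (le_max_right N 1) hn
  have hnN : N ≤ n := le_trans (le_max_left N 1) hn
  have hM := maxJ_pos ν hν hsupp n
  have h1 := hN n hnN
  rw [show elog (maxJ (dyadicLevel 2) (nuFn ν) n) =
      ((Real.log (maxJ (dyadicLevel 2) (nuFn ν) n) : ℝ) : EReal) from
      if_neg (not_le.2 hM), ← EReal.coe_mul, EReal.coe_lt_coe_iff] at h1
  set M := maxJ (dyadicLevel 2) (nuFn ν) n with hMdef
  have hnpos : (0:ℝ) < (n : ℝ) * Real.log 2 := by
    have := log2_pos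
    have : (0:ℝ) < (n:ℝ) := by exact_mod_cast hn1
    positivity
  have h2 : Real.log M ≤ -(δ * n * Real.log 2) := by
    rw [show Real.log M * (-(((n : ℝ) * Real.log 2)⁻¹)) =
        -Real.log M / ((n : ℝ) * Real.log 2) by field_simp] at h1
    rw [lt_div_iff₀ hnpos] at h1
    nlinarith
  have h3 : M ≤ Real.exp (-(δ * n * Real.log 2)) := by
    rw [← Real.exp_log hM]
    exact Real.exp_le_exp.2 h2
  exact le_trans (le_maxJ ν hQ) h3

lemma s_exp_le {s : ℝ} (hs : 0 ≤ s) : s * Real.exp (-s) ≤ 1 := by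
  rw [Real.exp_neg, ← div_eq_mul_inv, div_le_one (Real.exp_pos s)]
  linarith [Real.add_one_le_exp s]

section Jb

variable {ν} {b δ : ℝ} {N : ℕ}

/-- the defining image set of `J0b`. -/
def valSet (ν : Measure (Fin 2 → ℝ)) (b : ℝ) (Q : Set (Fin 2 → ℝ)) : Set ℝ :=
  (fun Q' => (ν Q').toReal ^ b * |Real.log (volume Q').toReal|) ''
    {Q' | Q' ∈ dyadicFamily 2 ∧ Q' ⊆ Q}

lemma J0b_eq_sSup (Q : Set (Fin 2 → ℝ)) : J0b ν b Q = sSup (valSet ν b Q) := rfl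

variable (hb : 0 < b) (hδ : 0 < δ)
  (hdec : ∀ n, N ≤ n → ∀ Q ∈ dyadicLevel 2 n, (ν Q).toReal ≤ Real.exp (-(δ * n * Real.log 2)))

include hb hδ hdec

lemma value_bound {n' : ℕ} (hn' : N ≤ n') {Q' : Set (Fin 2 → ℝ)} (hQ' : Q' ∈ dyadicLevel 2 n') :
    (ν Q').toReal ^ b * (2 * n' * Real.log 2) ≤
      4/(δ*b) * Real.exp (-(δ*b/2 * n' * Real.log 2)) := by
  set s := δ*b/2 * n' * Real.log 2 with hsdef
  have hs0 : 0 ≤ s := by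
    have := log2_pos
    positivity
  have hpow : (ν Q').toReal ^ b ≤ Real.exp (-(2*s)) := by
    have h1 : (ν Q').toReal ^ b ≤ Real.exp (-(δ * n' * Real.log 2)) ^ b :=
      Real.rpow_le_rpow ENNReal.toReal_nonneg (hdec n' hn' Q' hQ') hb.le
    rwa [← Real.exp_mul, show -(δ * n' * Real.log 2) * b = -(2*s) by rw [hsdef]; ring] at h1
  have hlog : 2 * (n':ℝ) * Real.log 2 = 4/(δ*b) * s := by
    rw [hsdef]; field_simp; ring
  calc (ν Q').toReal ^ b * (2 * n' * Real.log 2)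
      ≤ Real.exp (-(2*s)) * (2 * n' * Real.log 2) := by
        apply mul_le_mul_of_nonneg_right hpow
        rw [hlog]; positivity
    _ = (4/(δ*b) * Real.exp (-s)) * (s * Real.exp (-s)) := by
        rw [hlog, show -(2*s) = -s + -s by ring, Real.exp_add]; ring
    _ ≤ (4/(δ*b) * Real.exp (-s)) * 1 := by
        apply mul_le_mul_of_nonneg_left (s_exp_le hs0)
        positivity
    _ = 4/(δ*b) * Real.exp (-(δ*b/2 * n' * Real.log 2)) := by rw [mul_one, hsdef]

lemma valSet_global_bound :
    ∀ Q, ∀ y ∈ valSet ν b Q,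
      y ≤ max ((max 1 (ν Set.univ).toReal) ^ b * (2 * N * Real.log 2)) (4/(δ*b)) := by
  rintro Q y ⟨Q', ⟨hQ'fam, _⟩, rfl⟩
  obtain ⟨n', hQ'⟩ := Set.mem_iUnion.1 hQ'fam
  obtain ⟨k', hk', rfl⟩ := hQ'
  simp only [abs_log_volume]
  by_cases hcase : n' ≤ N
  · refine le_max_of_le_left ?_
    have hv1 : (ν (dyadicCube 2 n' k')).toReal ≤ max 1 (ν Set.univ).toReal :=
      le_trans (ENNReal.toReal_mono (measure_ne_top ν _) (measure_mono (Set.subset_univ _)))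
        (le_max_right _ _)
    have hv2 : (ν (dyadicCube 2 n' k')).toReal ^ b ≤ (max 1 (ν Set.univ).toReal) ^ b :=
      Real.rpow_le_rpow ENNReal.toReal_nonneg hv1 hb.le
    have hv3 : 2 * (n':ℝ) * Real.log 2 ≤ 2 * N * Real.log 2 := by
      have h := log2_pos
      have : (n':ℝ) ≤ N := by exact_mod_cast hcase
      nlinarith
    have hl2 := log2_pos
    apply mul_le_mul hv2 hv3 (by positivity)
      (Real.rpow_nonneg (le_trans zero_le_one (le_max_left _ _)) _)
  · push_neg at hcase
    refine le_max_of_le_right ?_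
    refine le_trans (value_bound hb hδ hdec hcase.le ⟨k', hk', rfl⟩) ?_
    have h1 : Real.exp (-(δ*b/2 * n' * Real.log 2)) ≤ 1 := by
      rw [Real.exp_le_one_iff, neg_nonpos]
      have := log2_pos
      positivity
    calc 4/(δ*b) * Real.exp (-(δ*b/2 * n' * Real.log 2)) ≤ 4/(δ*b) * 1 := by
          apply mul_le_mul_of_nonneg_left h1; positivity
      _ = 4/(δ*b) := mul_one _

lemma bddAbove_valSet (Q : Set (Fin 2 → ℝ)) : BddAbove (valSet ν b Q) :=
  ⟨_, fun y hy => valSet_global_bound hb hδ hdec Q y hy⟩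

lemma J0b_lower {n : ℕ} {Q : Set (Fin 2 → ℝ)} (hQ : Q ∈ dyadicLevel 2 n) :
    (ν Q).toReal ^ b * (2 * n * Real.log 2) ≤ J0b ν b Q := by
  obtain ⟨k, hk, rfl⟩ := hQ
  refine le_csSup (bddAbove_valSet hb hδ hdec _) ?_
  exact ⟨dyadicCube 2 n k, ⟨mem_family ⟨k, hk, rfl⟩, subset_rfl⟩, by
    simp only [abs_log_volume]⟩

lemma J0b_nonneg {n : ℕ} {Q : Set (Fin 2 → ℝ)} (hQ : Q ∈ dyadicLevel 2 n) :
    0 ≤ J0b ν b Q := by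
  refine le_trans ?_ (J0b_lower hb hδ hdec hQ)
  have := log2_pos
  positivity

lemma J0b_upper {L n : ℕ} (hL : 1 ≤ L) (hn : N ≤ n)
    {Q : Set (Fin 2 → ℝ)} (hQ : Q ∈ dyadicLevel 2 n) :
    J0b ν b Q ≤ max ((ν Q).toReal ^ b * (2 * ((L:ℝ)*n) * Real.log 2))
      (4/(δ*b) * Real.exp (-(δ*b/2 * ((L:ℝ)*n) * Real.log 2))) := by
  rw [J0b_eq_sSup]
  refine csSup_le ⟨_, Q, ⟨mem_family hQ, subset_rfl⟩, rfl⟩ ?_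
  rintro y ⟨Q', ⟨hQ'fam, hQ'sub⟩, rfl⟩
  obtain ⟨n', hQ'⟩ := Set.mem_iUnion.1 hQ'fam
  obtain ⟨k', hk', hQ'eq⟩ := hQ'
  subst hQ'eq
  simp only [abs_log_volume]
  by_cases hcase : (n' : ℝ) ≤ (L:ℝ)*n
  · refine le_max_of_le_left ?_
    have hv2 : (ν (dyadicCube 2 n' k')).toReal ^ b ≤ (ν Q).toReal ^ b :=
      Real.rpow_le_rpow ENNReal.toReal_nonneg
        (ENNReal.toReal_mono (measure_ne_top ν _) (measure_mono hQ'sub)) hb.le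
    have hv3 : 2 * (n':ℝ) * Real.log 2 ≤ 2 * ((L:ℝ)*n) * Real.log 2 := by
      have := log2_pos
      nlinarith
    refine mul_le_mul hv2 hv3 ?_ (Real.rpow_nonneg ENNReal.toReal_nonneg _)
    have := log2_pos
    positivity
  · push_neg at hcase
    refine le_max_of_le_right ?_
    have hn'N : N ≤ n' := by
      have h3 : (N:ℝ) ≤ (n:ℝ) := by exact_mod_cast hn
      have h2 : (n:ℝ) ≤ (L:ℝ)*n := by
        have h4 : (1:ℝ) ≤ (L:ℝ) := by exact_mod_cast hL
        nlinarith [Nat.cast_nonneg (α := ℝ) n]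
      have h5 : (N:ℝ) < (n':ℝ) := by linarith
      exact_mod_cast h5.le
    refine le_trans (value_bound hb hδ hdec hn'N ⟨k', hk', rfl⟩) ?_
    apply mul_le_mul_of_nonneg_left _ (by positivity)
    apply Real.exp_le_exp.2
    have hpos : 0 < δ*b/2*Real.log 2 := by
      have := log2_pos
      positivity
    nlinarith [hpos, hcase]

end Jb

lemma cubeSum_eq {d : ℕ} (F : Set (Set (Fin d → ℝ))) (J : Set (Fin d → ℝ) → ℝ) {q : ℝ}
    (hq : q ≠ 0) : cubeSum F J q = ∑' Q : F, J (Q : Set (Fin d → ℝ)) ^ q := by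
  refine tsum_congr fun Q => ?_
  by_cases h : J (Q : Set (Fin d → ℝ)) = 0
  · simp [h, Real.zero_rpow hq]
  · simp [h]

section Sums

variable {ν} {b δ : ℝ} {N : ℕ}

lemma S_lb [IsFiniteMeasure ν] (hν : ν ≠ 0) (hsupp : ν (unitCube 2)ᶜ = 0) (n : ℕ) {t : ℝ}
    (ht : 0 < t) :
    ((ν (unitCube 2)).toReal / 4^n) ^ t ≤ cubeSum (dyadicLevel 2 n) (nuFn ν) t := by
  haveI : Finite ↑(dyadicLevel 2 n) := (level_finite n).to_subtype
  rw [cubeSum_eq _ _ ht.ne']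
  obtain ⟨Q, hQ, hge⟩ := exists_big ν hν hsupp n
  calc ((ν (unitCube 2)).toReal / 4^n) ^ t ≤ nuFn ν Q ^ t :=
        Real.rpow_le_rpow (by have := nuQ_pos ν hν hsupp; positivity) hge ht.le
    _ ≤ _ := Summable.le_tsum (f := fun Q : ↑(dyadicLevel 2 n) => nuFn ν ↑Q ^ t)
        (Summable.of_finite) (⟨Q, hQ⟩ : ↑(dyadicLevel 2 n))
        (fun _ _ => Real.rpow_nonneg ENNReal.toReal_nonneg _)

lemma S_pos [IsFiniteMeasure ν] (hν : ν ≠ 0) (hsupp : ν (unitCube 2)ᶜ = 0) (n : ℕ) {t : ℝ}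
    (ht : 0 < t) : 0 < cubeSum (dyadicLevel 2 n) (nuFn ν) t := by
  refine lt_of_lt_of_le ?_ (S_lb hν hsupp n ht)
  have := nuQ_pos ν hν hsupp
  exact Real.rpow_pos_of_pos (by positivity) t

lemma S_ub [IsFiniteMeasure ν] (n : ℕ) {t : ℝ} (ht : 0 < t) :
    cubeSum (dyadicLevel 2 n) (nuFn ν) t ≤ 4^n * max 1 ((ν Set.univ).toReal ^ t) := by
  haveI : Finite ↑(dyadicLevel 2 n) := (level_finite n).to_subtype
  rw [cubeSum_eq _ _ ht.ne']
  set Mt := max 1 ((ν Set.univ).toReal ^ t) with hMt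
  have hterm : ∀ Q : ↑(dyadicLevel 2 n), nuFn ν ↑Q ^ t ≤ Mt := by
    intro Q
    by_cases h : (ν (Q : Set (Fin 2 → ℝ))).toReal ≤ 1
    · exact le_trans (Real.rpow_le_one ENNReal.toReal_nonneg h ht.le) (le_max_left _ _)
    · exact le_trans (Real.rpow_le_rpow ENNReal.toReal_nonneg
        (ENNReal.toReal_mono (measure_ne_top _ _) (measure_mono (Set.subset_univ _))) ht.le)
        (le_max_right _ _)
  have hMt0 : (0:ℝ) ≤ Mt := le_trans zero_le_one (le_max_left _ _)
  calc ∑' Q : ↑(dyadicLevel 2 n), nuFn ν ↑Q ^ t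
      ≤ ∑' _Q : ↑(dyadicLevel 2 n), Mt := Summable.tsum_le_tsum hterm (Summable.of_finite) (Summable.of_finite)
    _ = (dyadicLevel 2 n).ncard • Mt := by rw [tsum_const, Nat.card_coe_set_eq]
    _ ≤ 4^n * Mt := by
        rw [nsmul_eq_mul]
        refine mul_le_mul_of_nonneg_right ?_ hMt0
        calc ((dyadicLevel 2 n).ncard : ℝ) ≤ ((4^n : ℕ) : ℝ) := Nat.cast_le.2 (ncard_level_le n)
          _ = 4^n := by push_cast; ring

variable (hb : 0 < b) (hδ : 0 < δ)
  (hdec : ∀ n, N ≤ n → ∀ Q ∈ dyadicLevel 2 n, (ν Q).toReal ≤ Real.exp (-(δ * n * Real.log 2)))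

include hb hδ hdec

lemma T_lb [IsFiniteMeasure ν] (n : ℕ) {q : ℝ} (hq : 0 < q) :
    (2*(n:ℝ)*Real.log 2) ^ q * cubeSum (dyadicLevel 2 n) (nuFn ν) (b*q) ≤
      cubeSum (dyadicLevel 2 n) (J0b ν b) q := by
  haveI : Finite ↑(dyadicLevel 2 n) := (level_finite n).to_subtype
  rw [cubeSum_eq _ _ hq.ne', cubeSum_eq _ _ (mul_pos hb hq).ne', ← tsum_mul_left]
  refine Summable.tsum_le_tsum ?_ (Summable.of_finite) (Summable.of_finite)
  rintro ⟨Q, hQ⟩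
  have h1 : (2*(n:ℝ)*Real.log 2) ^ q * nuFn ν Q ^ (b*q)
      = (nuFn ν Q ^ b * (2*(n:ℝ)*Real.log 2)) ^ q := by
    simp only [nuFn]
    rw [Real.mul_rpow (Real.rpow_nonneg ENNReal.toReal_nonneg _)
      (by have := log2_pos; positivity), Real.rpow_mul ENNReal.toReal_nonneg]
    ring
  simp only []
  rw [h1]
  refine Real.rpow_le_rpow ?_ ?_ hq.le
  · have := log2_pos
    exact mul_nonneg (Real.rpow_nonneg ENNReal.toReal_nonneg _) (by positivity)
  · have h2 : 2*(n:ℝ)*Real.log 2 = 2*((n:ℕ):ℝ)*Real.log 2 := by norm_num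
    exact h2 ▸ J0b_lower hb hδ hdec hQ

lemma T_ub [IsFiniteMeasure ν] {L n : ℕ} (hL : 1 ≤ L) (hn : N ≤ n) {q : ℝ} (hq : 0 < q) :
    cubeSum (dyadicLevel 2 n) (J0b ν b) q ≤
      (2*((L:ℝ)*n)*Real.log 2) ^ q * cubeSum (dyadicLevel 2 n) (nuFn ν) (b*q) +
        4^n * (4/(δ*b) * Real.exp (-(δ*b/2 * ((L:ℝ)*n) * Real.log 2))) ^ q := by
  haveI : Finite ↑(dyadicLevel 2 n) := (level_finite n).to_subtype
  rw [cubeSum_eq _ _ hq.ne', cubeSum_eq _ _ (mul_pos hb hq).ne']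
  set Y := 4/(δ*b) * Real.exp (-(δ*b/2 * ((L:ℝ)*n) * Real.log 2)) with hY
  have hY0 : 0 ≤ Y := by rw [hY]; positivity
  have key : ∀ Q : ↑(dyadicLevel 2 n),
      J0b ν b ↑Q ^ q ≤ (2*((L:ℝ)*n)*Real.log 2) ^ q * nuFn ν ↑Q ^ (b*q) + Y ^ q := by
    rintro ⟨Q, hQ⟩
    have h0 := J0b_nonneg hb hδ hdec hQ
    have h1 : J0b ν b Q ^ q ≤
        (max ((ν Q).toReal ^ b * (2 * ((L:ℝ)*n) * Real.log 2)) Y) ^ q :=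
      Real.rpow_le_rpow h0 (J0b_upper hb hδ hdec hL hn hQ) hq.le
    refine le_trans h1 ?_
    have hX0 : 0 ≤ (ν Q).toReal ^ b * (2 * ((L:ℝ)*n) * Real.log 2) := by
      have := log2_pos
      exact mul_nonneg (Real.rpow_nonneg ENNReal.toReal_nonneg _) (by positivity)
    have hXeq : ((ν Q).toReal ^ b * (2 * ((L:ℝ)*n) * Real.log 2)) ^ q
        = (2*((L:ℝ)*n)*Real.log 2) ^ q * nuFn ν Q ^ (b*q) := by
      simp only [nuFn]
      rw [Real.mul_rpow (Real.rpow_nonneg ENNReal.toReal_nonneg _)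
        (by have := log2_pos; positivity), Real.rpow_mul ENNReal.toReal_nonneg]
      ring
    rcases max_cases ((ν Q).toReal ^ b * (2 * ((L:ℝ)*n) * Real.log 2)) Y with ⟨hm, _⟩ | ⟨hm, _⟩
    · rw [hm, hXeq]
      have : 0 ≤ Y ^ q := Real.rpow_nonneg hY0 _
      linarith
    · rw [hm]
      have : 0 ≤ ((ν Q).toReal ^ b * (2 * ((L:ℝ)*n) * Real.log 2)) ^ q :=
        Real.rpow_nonneg hX0 _
      rw [hXeq] at this
      linarith
  calc ∑' Q : ↑(dyadicLevel 2 n), J0b ν b ↑Q ^ q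
      ≤ ∑' Q : ↑(dyadicLevel 2 n), ((2*((L:ℝ)*n)*Real.log 2) ^ q * nuFn ν ↑Q ^ (b*q) + Y ^ q) :=
        Summable.tsum_le_tsum key (Summable.of_finite) (Summable.of_finite)
    _ = (2*((L:ℝ)*n)*Real.log 2) ^ q * (∑' Q : ↑(dyadicLevel 2 n), nuFn ν ↑Q ^ (b*q)) +
          (dyadicLevel 2 n).ncard • (Y ^ q) := by
        rw [Summable.tsum_add (Summable.of_finite) (Summable.of_finite), tsum_mul_left, tsum_const,
          Nat.card_coe_set_eq]
    _ ≤ _ := by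
        refine add_le_add (le_refl _) ?_
        rw [nsmul_eq_mul]
        refine mul_le_mul_of_nonneg_right ?_ (Real.rpow_nonneg hY0 _)
        calc ((dyadicLevel 2 n).ncard : ℝ) ≤ ((4^n : ℕ) : ℝ) := Nat.cast_le.2 (ncard_level_le n)
          _ = 4^n := by push_cast; ring

lemma J0b_zero_iff [IsFiniteMeasure ν] {n : ℕ} (hn : 1 ≤ n) {Q : Set (Fin 2 → ℝ)}
    (hQ : Q ∈ dyadicLevel 2 n) : J0b ν b Q = 0 ↔ nuFn ν Q = 0 := by
  constructor
  · intro h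
    by_contra hne
    have hpos : 0 < (ν Q).toReal := lt_of_le_of_ne ENNReal.toReal_nonneg (Ne.symm hne)
    have hlow := J0b_lower hb hδ hdec hQ
    have h2 : 0 < (ν Q).toReal ^ b * (2 * (n:ℝ) * Real.log 2) := by
      have hl2 := log2_pos
      have hn' : (0:ℝ) < (n:ℝ) := by exact_mod_cast hn
      have := Real.rpow_pos_of_pos hpos b
      positivity
    rw [h] at hlow
    linarith
  · intro h
    have h0 : (ν Q).toReal = 0 := h
    rw [J0b_eq_sSup]
    apply le_antisymm
    · refine csSup_le ⟨_, Q, ⟨mem_family hQ, subset_rfl⟩, rfl⟩ ?_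
      rintro y ⟨Q', ⟨_, hQ'sub⟩, rfl⟩
      have h1 : (ν Q').toReal = 0 := le_antisymm
        (h0 ▸ ENNReal.toReal_mono (measure_ne_top ν _) (measure_mono hQ'sub))
        ENNReal.toReal_nonneg
      simp only [h1, Real.zero_rpow hb.ne', zero_mul, le_refl]
    · refine le_csSup (bddAbove_valSet hb hδ hdec _) ⟨Q, ⟨mem_family hQ, subset_rfl⟩, ?_⟩
      simp only [h0, Real.zero_rpow hb.ne', zero_mul]

lemma T_pos [IsFiniteMeasure ν] (hν : ν ≠ 0) (hsupp : ν (unitCube 2)ᶜ = 0) {n : ℕ}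
    (hn : 1 ≤ n) {q : ℝ} (hq : 0 < q) : 0 < cubeSum (dyadicLevel 2 n) (J0b ν b) q := by
  refine lt_of_lt_of_le ?_ (T_lb hb hδ hdec n hq)
  have hl2 := log2_pos
  have hn' : (0:ℝ) < (n:ℝ) := by exact_mod_cast hn
  have h1 : (0:ℝ) < 2*(n:ℝ)*Real.log 2 := by positivity
  exact mul_pos (Real.rpow_pos_of_pos h1 q) (S_pos hν hsupp n (mul_pos hb hq))

lemma sum_zero_eq [IsFiniteMeasure ν] {n : ℕ} (hn : 1 ≤ n) :
    cubeSum (dyadicLevel 2 n) (J0b ν b) 0 = cubeSum (dyadicLevel 2 n) (nuFn ν) 0 := by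
  refine tsum_congr ?_
  rintro ⟨Q, hQ⟩
  by_cases h : nuFn ν Q = 0
  · simp [h, (J0b_zero_iff hb hδ hdec hn hQ).2 h]
  · have h2 : ¬ J0b ν b Q = 0 := fun hc => h ((J0b_zero_iff hb hδ hdec hn hQ).1 hc)
    simp [h, h2]

end Sums

lemma tau_eq_coe {d : ℕ} (Fam : ℕ → Set (Set (Fin d → ℝ))) (J : Set (Fin d → ℝ) → ℝ)
    {n : ℕ} {q : ℝ} (hpos : 0 < cubeSum (Fam n) J q) :
    tauApprox Fam J n q =
      ((Real.log (cubeSum (Fam n) J q) * (((n:ℝ) * Real.log 2)⁻¹) : ℝ) : EReal) := by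
  rw [tauApprox, elog, if_neg (not_le.2 hpos), ← EReal.coe_mul]

end S4

set_option maxHeartbeats 1000000 in
/-- In dimension `d = 2`, for a non-zero finite Borel measure `ν` on `𝒬`
with `dim_∞(ν) > 0`: for all `b > 0` and `q ≥ 0` one has `τ_{𝔍_{ν,0,b}}(q) = β_ν(bq)`;
and if `β_ν(bq)` exists as a limit, then also `β_ν(bq) = liminf_n τ_{𝔍_{ν,0,b},n}(q)`. -/
theorem statement4 (ν : Measure (Fin 2 → ℝ)) [IsFiniteMeasure ν]
    (hν : ν ≠ 0) (hsupp : ν (unitCube 2)ᶜ = 0)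
    (hdim : 0 < dimInfty (dyadicLevel 2) (nuFn ν)) :
    ∀ b : ℝ, 0 < b → ∀ q : ℝ, 0 ≤ q →
      tauFn (dyadicLevel 2) (J0b ν b) q = tauFn (dyadicLevel 2) (nuFn ν) (b * q) ∧
      (Filter.liminf (fun n => tauApprox (dyadicLevel 2) (nuFn ν) n (b * q)) Filter.atTop =
          Filter.limsup (fun n => tauApprox (dyadicLevel 2) (nuFn ν) n (b * q)) Filter.atTop →
        tauFn (dyadicLevel 2) (nuFn ν) (b * q) =
          Filter.liminf (fun n => tauApprox (dyadicLevel 2) (J0b ν b) n q) Filter.atTop) := by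
  intro b hb q hq
  obtain ⟨δ, hδ, N, hN1, hdec⟩ := S4.exists_decay ν hν hsupp hdim
  rcases hq.eq_or_lt with hq0 | hqpos
  · -- degenerate case q = 0
    have hbq0 : b * q = 0 := by rw [← hq0]; ring
    have hev : ∀ᶠ n in atTop, tauApprox (dyadicLevel 2) (J0b ν b) n q =
        tauApprox (dyadicLevel 2) (nuFn ν) n (b * q) := by
      filter_upwards [eventually_ge_atTop 1] with n hn
      rw [← hq0, mul_zero]
      simp only [tauApprox]
      rw [S4.sum_zero_eq hb hδ hdec hn]
    refine ⟨limsup_congr hev, fun hlim => ?_⟩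
    rw [show Filter.liminf (fun n => tauApprox (dyadicLevel 2) (J0b ν b) n q) Filter.atTop =
        Filter.liminf (fun n => tauApprox (dyadicLevel 2) (nuFn ν) n (b * q)) Filter.atTop from
        liminf_congr hev, hlim]
    rfl
  · -- main case q > 0
    have hbq : 0 < b * q := mul_pos hb hqpos
    have hl2 := S4.log2_pos
    set a := (ν (unitCube 2)).toReal with ha
    have hapos : 0 < a := S4.nuQ_pos ν hν hsupp
    set u : ℕ → ℝ := fun n =>
      Real.log (cubeSum (dyadicLevel 2 n) (nuFn ν) (b*q)) * (((n:ℝ) * Real.log 2)⁻¹) with hu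
    set v : ℕ → ℝ := fun n =>
      Real.log (cubeSum (dyadicLevel 2 n) (J0b ν b) q) * (((n:ℝ) * Real.log 2)⁻¹) with hv
    have hSpos : ∀ n, 0 < cubeSum (dyadicLevel 2 n) (nuFn ν) (b*q) :=
      fun n => S4.S_pos hν hsupp n hbq
    have hTpos : ∀ n, 1 ≤ n → 0 < cubeSum (dyadicLevel 2 n) (J0b ν b) q :=
      fun n hn => S4.T_pos hb hδ hdec hν hsupp hn hqpos
    have hτν : ∀ n, tauApprox (dyadicLevel 2) (nuFn ν) n (b*q) = ((u n : ℝ) : EReal) :=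
      fun n => S4.tau_eq_coe _ _ (hSpos n)
    have hτJ : ∀ᶠ n in atTop, tauApprox (dyadicLevel 2) (J0b ν b) n q = ((v n : ℝ) : EReal) := by
      filter_upwards [eventually_ge_atTop 1] with n hn
      exact S4.tau_eq_coe _ _ (hTpos n hn)
    set β : EReal := limsup (fun n => ((u n : ℝ) : EReal)) atTop with hβ
    have hβeq : tauFn (dyadicLevel 2) (nuFn ν) (b*q) = β :=
      limsup_congr (Eventually.of_forall hτν)
    have hτJeq : tauFn (dyadicLevel 2) (J0b ν b) q =
        limsup (fun n => ((v n : ℝ) : EReal)) atTop := limsup_congr hτJ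
    have hinv : Tendsto (fun n : ℕ => (((n:ℝ) * Real.log 2)⁻¹)) atTop (𝓝 0) :=
      (tendsto_natCast_atTop_atTop.atTop_mul_const hl2).inv_tendsto_atTop
    -- pointwise comparison u ≤ v
    have huv : ∀ᶠ n in atTop, u n ≤ v n := by
      filter_upwards [eventually_ge_atTop 1] with n hn
      have hn' : (1:ℝ) ≤ (n:ℝ) := by exact_mod_cast hn
      have h1 : (1:ℝ) ≤ 2*(n:ℝ)*Real.log 2 := by nlinarith [Real.log_two_gt_d9]
      have h3 : (1:ℝ) ≤ (2*(n:ℝ)*Real.log 2) ^ q := by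
        rw [← Real.one_rpow q]
        exact Real.rpow_le_rpow zero_le_one h1 hqpos.le
      have h2 : cubeSum (dyadicLevel 2 n) (nuFn ν) (b*q) ≤
          cubeSum (dyadicLevel 2 n) (J0b ν b) q := by
        refine le_trans ?_ (S4.T_lb hb hδ hdec n hqpos)
        exact le_mul_of_one_le_left (hSpos n).le h3
      exact mul_le_mul_of_nonneg_right (Real.log_le_log (hSpos n) h2) (by positivity)
    have hlog4 : Real.log 4 = 2 * Real.log 2 := by
      rw [show (4:ℝ) = 2^2 by norm_num, Real.log_pow]; push_cast; ring
    -- lower bound for u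
    set w : ℕ → ℝ := fun n => (b*q) * Real.log a * (((n:ℝ) * Real.log 2)⁻¹) - 2*(b*q) with hw
    have hw_tend : Tendsto w atTop (𝓝 (-(2*(b*q)))) := by
      have := (hinv.const_mul ((b*q) * Real.log a)).sub_const (2*(b*q))
      simpa only [mul_zero, zero_sub] using this
    have hw_le_u : ∀ᶠ n in atTop, w n ≤ u n := by
      filter_upwards [eventually_ge_atTop 1] with n hn
      have hn' : (1:ℝ) ≤ (n:ℝ) := by exact_mod_cast hn
      have hn0 : (n:ℝ) ≠ 0 := by linarith
      have h4n : (0:ℝ) < 4^n := by positivity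
      have hdiv : (0:ℝ) < a / 4^n := by positivity
      have h1 : Real.log ((a / 4^n) ^ (b*q)) ≤
          Real.log (cubeSum (dyadicLevel 2 n) (nuFn ν) (b*q)) :=
        Real.log_le_log (Real.rpow_pos_of_pos hdiv _) (S4.S_lb hν hsupp n hbq)
      have h2 : Real.log ((a / 4^n) ^ (b*q)) = (b*q) * (Real.log a - n * Real.log 4) := by
        rw [Real.log_rpow hdiv, Real.log_div hapos.ne' h4n.ne', Real.log_pow]
      have hcan : ((n:ℝ) * Real.log 2) * (((n:ℝ) * Real.log 2)⁻¹) = 1 :=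
        mul_inv_cancel₀ (mul_ne_zero hn0 hl2.ne')
      have h3 : ((b*q) * (Real.log a - n * Real.log 4)) * (((n:ℝ) * Real.log 2)⁻¹) = w n := by
        rw [hlog4, hw]
        linear_combination (-(2*(b*q))) * hcan
      calc w n = ((b*q) * (Real.log a - n * Real.log 4)) * (((n:ℝ) * Real.log 2)⁻¹) := h3.symm
        _ ≤ u n := by
            refine mul_le_mul_of_nonneg_right ?_ (by positivity)
            rw [← h2]; exact h1
    have hu_lb : ∀ᶠ n in atTop, -(2*(b*q)) - 1 ≤ u n := by
      filter_upwards [hw_le_u, hw_tend.eventually_const_lt (by linarith : -(2*(b*q)) - 1 < -(2*(b*q)))]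
        with n h1 h2
      linarith
    -- upper bound for u
    set Mt : ℝ := max 1 ((ν Set.univ).toReal ^ (b*q)) with hMt
    have hMt1 : (1:ℝ) ≤ Mt := le_max_left _ _
    have hu_ub : ∀ᶠ n in atTop, u n ≤ 3 := by
      have hy : Tendsto (fun n : ℕ => 2 + Real.log Mt * (((n:ℝ) * Real.log 2)⁻¹)) atTop (𝓝 2) := by
        have := (hinv.const_mul (Real.log Mt)).const_add 2
        simpa using this
      filter_upwards [eventually_ge_atTop 1,
        hy.eventually_lt_const (by norm_num : (2:ℝ) < 3)] with n hn hy3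
      have hn' : (1:ℝ) ≤ (n:ℝ) := by exact_mod_cast hn
      have hn0 : (n:ℝ) ≠ 0 := by linarith
      have h4n : (0:ℝ) < 4^n := by positivity
      have h1 : Real.log (cubeSum (dyadicLevel 2 n) (nuFn ν) (b*q)) ≤
          Real.log ((4:ℝ)^n * Mt) :=
        Real.log_le_log (hSpos n) (S4.S_ub n hbq)
      have h2 : Real.log ((4:ℝ)^n * Mt) = n * Real.log 4 + Real.log Mt := by
        rw [Real.log_mul h4n.ne' (by linarith), Real.log_pow]
      have hcan : ((n:ℝ) * Real.log 2) * (((n:ℝ) * Real.log 2)⁻¹) = 1 :=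
        mul_inv_cancel₀ (mul_ne_zero hn0 hl2.ne')
      have h3 : ((n:ℝ) * Real.log 4 + Real.log Mt) * (((n:ℝ) * Real.log 2)⁻¹) =
          2 + Real.log Mt * (((n:ℝ) * Real.log 2)⁻¹) := by
        rw [hlog4]
        linear_combination 2 * hcan
      have h4 : u n ≤ 2 + Real.log Mt * (((n:ℝ) * Real.log 2)⁻¹) := by
        rw [← h3]
        exact mul_le_mul_of_nonneg_right (h1.trans_eq h2) (by positivity)
      linarith
    -- β is a real number
    have hβ_ub : β ≤ ((3:ℝ) : EReal) := by
      rw [hβ]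
      refine limsup_le_of_le (h := ?_)
      filter_upwards [hu_ub] with n h
      exact EReal.coe_le_coe_iff.2 h
    have hβ_lb : ((-(2*(b*q)) - 1 : ℝ) : EReal) ≤ β := by
      rw [hβ]
      refine le_trans (le_liminf_of_le (h := ?_)) liminf_le_limsup
      filter_upwards [hu_lb] with n h
      exact EReal.coe_le_coe_iff.2 h
    have hβtop : β ≠ ⊤ := (lt_of_le_of_lt hβ_ub (EReal.coe_lt_top 3)).ne
    have hβbot : β ≠ ⊥ := (lt_of_lt_of_le (EReal.bot_lt_coe _) hβ_lb).ne'
    set βr : ℝ := β.toReal with hβrdef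
    have hβr : (βr : EReal) = β := EReal.coe_toReal hβtop hβbot
    -- choice of L
    have hc : (0:ℝ) < q*(δ*b/2) := by positivity
    obtain ⟨L₀, hL₀⟩ := exists_nat_gt ((8 + 2*(b*q)) / (q*(δ*b/2)))
    set L : ℕ := max L₀ 1 with hLdef
    have hL1 : 1 ≤ L := le_max_right _ _
    set γ : ℝ := 2 - q*(δ*b/2)*L with hγdef
    have hγ : γ < -(2*(b*q)) - 3 := by
      have h1 : (8 + 2*(b*q)) < L₀ * (q*(δ*b/2)) := (div_lt_iff₀ hc).1 hL₀
      have h2 : (L₀ : ℝ) ≤ L := by exact_mod_cast le_max_left L₀ 1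
      rw [hγdef]
      nlinarith [mul_le_mul_of_nonneg_left h2 hc.le, hbq]
    -- upper bound for v
    set K : ℝ := 2*(L:ℝ)*Real.log 2 with hK
    have hKpos : 0 < K := by
      have : (1:ℝ) ≤ (L:ℝ) := by exact_mod_cast hL1
      rw [hK]; positivity
    set Cc : ℝ := 4/(δ*b) with hCc
    have hCcpos : 0 < Cc := by rw [hCc]; positivity
    set e₁ : ℕ → ℝ := fun n => q * Real.log (K * n) * (((n:ℝ) * Real.log 2)⁻¹) with he₁def
    set g : ℕ → ℝ := fun n => γ + q * Real.log Cc * (((n:ℝ) * Real.log 2)⁻¹) with hgdef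
    have hvub : ∀ᶠ n in atTop, v n ≤ max (u n + e₁ n) (g n) +
        Real.log 2 * (((n:ℝ) * Real.log 2)⁻¹) := by
      filter_upwards [eventually_ge_atTop (max N 1)] with n hn
      have hnN : N ≤ n := le_trans (le_max_left _ _) hn
      have hn1 : 1 ≤ n := le_trans (le_max_right _ _) hn
      have hn' : (1:ℝ) ≤ (n:ℝ) := by exact_mod_cast hn1
      have hn0 : (n:ℝ) ≠ 0 := by linarith
      have hX : (0:ℝ) < 2*((L:ℝ)*n)*Real.log 2 := by
        have h1 : (1:ℝ) ≤ (L:ℝ) := by exact_mod_cast hL1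
        nlinarith
      set S := cubeSum (dyadicLevel 2 n) (nuFn ν) (b*q) with hSdef
      set Y : ℝ := Cc * Real.exp (-(δ*b/2 * ((L:ℝ)*n) * Real.log 2)) with hYdef
      have hYpos : 0 < Y := by rw [hYdef]; positivity
      set A : ℝ := (2*((L:ℝ)*n)*Real.log 2) ^ q * S with hAdef
      set B : ℝ := 4^n * Y ^ q with hBdef
      have hApos : 0 < A := mul_pos (Real.rpow_pos_of_pos hX q) (hSpos n)
      have hBpos : 0 < B := by
        refine mul_pos (by positivity) (Real.rpow_pos_of_pos hYpos q)
      have hT_AB : cubeSum (dyadicLevel 2 n) (J0b ν b) q ≤ A + B :=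
        S4.T_ub hb hδ hdec hL1 hnN hqpos
      have hmaxpos : 0 < max A B := lt_max_of_lt_left hApos
      have hT2 : cubeSum (dyadicLevel 2 n) (J0b ν b) q ≤ 2 * max A B := by
        refine le_trans hT_AB ?_
        rcases le_total A B with h | h
        · rw [max_eq_right h]; linarith
        · rw [max_eq_left h]; linarith
      have hlogT : Real.log (cubeSum (dyadicLevel 2 n) (J0b ν b) q) ≤
          Real.log 2 + Real.log (max A B) := by
        have h1 := Real.log_le_log (hTpos n hn1) hT2
        rwa [Real.log_mul two_ne_zero hmaxpos.ne'] at h1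
      have hlogmax : Real.log (max A B) = max (Real.log A) (Real.log B) := by
        rcases le_total A B with h | h
        · rw [max_eq_right h, max_eq_right (Real.log_le_log hApos h)]
        · rw [max_eq_left h, max_eq_left (Real.log_le_log hBpos h)]
      have hlogA : Real.log A = q * Real.log (K * n) + Real.log S := by
        rw [hAdef, Real.log_mul (Real.rpow_pos_of_pos hX q).ne' (hSpos n).ne',
          show 2*((L:ℝ)*n)*Real.log 2 = K * n by rw [hK]; ring, Real.log_rpow (by
            rw [show K * (n:ℝ) = 2*((L:ℝ)*n)*Real.log 2 by rw [hK]; ring]; exact hX)]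
      have hlogB : Real.log B = n * Real.log 4 + q * (Real.log Cc +
          (-(δ*b/2 * ((L:ℝ)*n) * Real.log 2))) := by
        rw [hBdef, Real.log_mul (by positivity) (Real.rpow_pos_of_pos hYpos q).ne',
          Real.log_pow, Real.log_rpow hYpos, hYdef,
          Real.log_mul hCcpos.ne' (Real.exp_pos _).ne', Real.log_exp]
      have hcan : ((n:ℝ) * Real.log 2) * (((n:ℝ) * Real.log 2)⁻¹) = 1 :=
        mul_inv_cancel₀ (mul_ne_zero hn0 hl2.ne')
      have hgB : Real.log B * (((n:ℝ) * Real.log 2)⁻¹) = g n := by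
        rw [hlogB, hgdef, hγdef, hlog4]
        linear_combination (2 - q*(δ*b/2)*(L:ℝ)) * hcan
      have huA : Real.log A * (((n:ℝ) * Real.log 2)⁻¹) = u n + e₁ n := by
        rw [hlogA, hu, he₁def]
        ring
      calc v n ≤ (Real.log 2 + Real.log (max A B)) * (((n:ℝ) * Real.log 2)⁻¹) :=
            mul_le_mul_of_nonneg_right hlogT (by positivity)
        _ = max (Real.log A * (((n:ℝ) * Real.log 2)⁻¹))
              (Real.log B * (((n:ℝ) * Real.log 2)⁻¹)) +
            Real.log 2 * (((n:ℝ) * Real.log 2)⁻¹) := by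
            rw [hlogmax, add_mul, max_mul_of_nonneg _ _ (by positivity :
              (0:ℝ) ≤ ((n:ℝ) * Real.log 2)⁻¹)]
            ring
        _ = max (u n + e₁ n) (g n) + Real.log 2 * (((n:ℝ) * Real.log 2)⁻¹) := by
            rw [huA, hgB]
    -- tendsto facts
    have hlogdiv : Tendsto (fun n : ℕ => Real.log n / n) atTop (𝓝 0) := by
      have h1 := Real.isLittleO_log_id_atTop.tendsto_div_nhds_zero
      have h2 := h1.comp (tendsto_natCast_atTop_atTop (R := ℝ))
      simpa [Function.comp_def] using h2
    have he₁ : Tendsto e₁ atTop (𝓝 0) := by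
      have hsum : Tendsto (fun n : ℕ => q * Real.log K * (((n:ℝ) * Real.log 2)⁻¹) +
          (q * (Real.log n / n)) * (Real.log 2)⁻¹) atTop (𝓝 0) := by
        have t1 := hinv.const_mul (q * Real.log K)
        have t2 := (hlogdiv.const_mul q).mul_const (Real.log 2)⁻¹
        have := t1.add t2
        simpa using this
      refine Tendsto.congr' ?_ hsum
      filter_upwards [eventually_ge_atTop 1] with n hn
      have hn' : (1:ℝ) ≤ (n:ℝ) := by exact_mod_cast hn
      have hn0 : (n:ℝ) ≠ 0 := by linarith
      rw [he₁def]
      simp only []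
      rw [Real.log_mul hKpos.ne' hn0, mul_inv]
      ring
    have hg : Tendsto g atTop (𝓝 γ) := by
      have := (hinv.const_mul (q * Real.log Cc)).const_add γ
      simpa only [mul_zero, add_zero] using this
    -- the two claims
    have claim_ge : β ≤ limsup (fun n => ((v n : ℝ) : EReal)) atTop := by
      refine limsup_le_limsup ?_
      filter_upwards [huv] with n h
      exact EReal.coe_le_coe_iff.2 h
    have claim_le : limsup (fun n => ((v n : ℝ) : EReal)) atTop ≤ β := by
      by_contra hcon
      push_neg at hcon
      obtain ⟨x, hx1, hx2⟩ := EReal.lt_iff_exists_real_btwn.1 hcon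
      have hxr : βr < x := by
        rw [← hβr] at hx1
        exact_mod_cast hx1
      set ε : ℝ := (x - βr)/3 with hε
      have hε0 : 0 < ε := by rw [hε]; linarith
      have E_a : ∀ᶠ n in atTop, u n < βr + ε := by
        have h1 : limsup (fun n => ((u n : ℝ) : EReal)) atTop < ((βr + ε : ℝ) : EReal) := by
          rw [← hβ, ← hβr]
          exact_mod_cast (by linarith : βr < βr + ε)
        filter_upwards [eventually_lt_of_limsup_lt h1] with n h
        exact_mod_cast h
      have E_b : ∀ᶠ n in atTop, e₁ n < ε := he₁.eventually_lt_const hε0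
      have E_c : ∀ᶠ n : ℕ in atTop, Real.log 2 * (((n:ℝ) * Real.log 2)⁻¹) < ε := by
        have := hinv.const_mul (Real.log 2)
        have h0 : Tendsto (fun n : ℕ => Real.log 2 * (((n:ℝ) * Real.log 2)⁻¹)) atTop (𝓝 0) := by
          simpa using this
        exact h0.eventually_lt_const hε0
      have E_d : ∀ᶠ n in atTop, g n < u n := by
        filter_upwards [hg.eventually_lt_const (by linarith : γ < -(2*(b*q)) - 2), hu_lb]
          with n h1 h2
        linarith
      have E_final : ∀ᶠ n in atTop, ((v n : ℝ) : EReal) ≤ ((x : ℝ) : EReal) := by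
        filter_upwards [hvub, E_a, E_b, E_c, E_d] with n h1 h2 h3 h4 h5
        have hmax : max (u n + e₁ n) (g n) ≤ u n + ε := by
          rcases max_cases (u n + e₁ n) (g n) with ⟨hm, _⟩ | ⟨hm, _⟩
          · rw [hm]; linarith
          · rw [hm]; linarith
        have : v n ≤ x := by
          have : v n ≤ u n + ε + ε := by linarith
          have hx3 : βr + 3*ε = x := by rw [hε]; ring
          linarith
        exact EReal.coe_le_coe_iff.2 this
      have hfin : limsup (fun n => ((v n : ℝ) : EReal)) atTop ≤ ((x : ℝ) : EReal) :=
        limsup_le_of_le (h := E_final)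
      exact absurd (lt_of_lt_of_le hx2 hfin) (lt_irrefl _)
    have claim : limsup (fun n => ((v n : ℝ) : EReal)) atTop = β :=
      le_antisymm claim_le claim_ge
    refine ⟨hτJeq.trans (claim.trans hβeq.symm), fun hlim => ?_⟩
    have hliminf_u : liminf (fun n => ((u n : ℝ) : EReal)) atTop =
        liminf (fun n => tauApprox (dyadicLevel 2) (nuFn ν) n (b*q)) atTop :=
      (liminf_congr (Eventually.of_forall hτν)).symm
    have hJliminf : liminf (fun n => tauApprox (dyadicLevel 2) (J0b ν b) n q) atTop =
        liminf (fun n => ((v n : ℝ) : EReal)) atTop := liminf_congr hτJ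
    rw [hJliminf]
    refine le_antisymm ?_ ?_
    · -- tauFn ν (b*q) ≤ liminf v
      have h1 : liminf (fun n => ((u n : ℝ) : EReal)) atTop ≤
          liminf (fun n => ((v n : ℝ) : EReal)) atTop := by
        refine liminf_le_liminf ?_
        filter_upwards [huv] with n h
        exact EReal.coe_le_coe_iff.2 h
      calc tauFn (dyadicLevel 2) (nuFn ν) (b*q)
          = liminf (fun n => tauApprox (dyadicLevel 2) (nuFn ν) n (b*q)) atTop := hlim.symm
        _ = liminf (fun n => ((u n : ℝ) : EReal)) atTop := hliminf_u.symm
        _ ≤ liminf (fun n => ((v n : ℝ) : EReal)) atTop := h1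
    · -- liminf v ≤ tauFn ν (b*q)
      calc liminf (fun n => ((v n : ℝ) : EReal)) atTop
          ≤ limsup (fun n => ((v n : ℝ) : EReal)) atTop := liminf_le_limsup
        _ = β := claim
        _ = tauFn (dyadicLevel 2) (nuFn ν) (b*q) := hβeq.symm
end
end

section
/- Let d > 2 and let ν be a non-zero Borel measure on 𝒬 that is absolutely continuous with respect to Lebesgue measure Λ with density f ∈ L^r(Λ) for some r ≥ d/2. Then for all q ∈ [0, r], liminf_{n→∞} τ_{𝔍_ν,n}(q) = τ_{𝔍_ν}(q) = d − 2q; the same equalities hold when the full family 𝒟_n is replaced by the Dirichlet family 𝒟_n^D throughout. -/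
set_option maxHeartbeats 1000000


open MeasureTheory Filter Set Topology Classical

noncomputable section

section CubeBasics

variable {d n : ℕ}

lemma dyadicCube_eq_pi (d n : ℕ) (k : Fin d → ℕ) :
    dyadicCube d n k =
      Set.pi Set.univ (fun i => Set.Ico ((k i : ℝ) / 2 ^ n) (((k i : ℝ) + 1) / 2 ^ n)) := by
  ext x; simp [dyadicCube, Set.mem_pi]

lemma measurableSet_dyadicCube (d n : ℕ) (k : Fin d → ℕ) :
    MeasurableSet (dyadicCube d n k) := by
  rw [dyadicCube_eq_pi]; exact MeasurableSet.univ_pi fun i => measurableSet_Ico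

lemma volume_dyadicCube (d n : ℕ) (k : Fin d → ℕ) :
    volume (dyadicCube d n k) = ENNReal.ofReal ((((2:ℝ) ^ n)⁻¹) ^ d) := by
  rw [dyadicCube_eq_pi, volume_pi_pi]
  have h : ∀ i : Fin d, volume (Set.Ico ((k i : ℝ) / 2 ^ n) (((k i : ℝ) + 1) / 2 ^ n))
      = ENNReal.ofReal (((2:ℝ) ^ n)⁻¹) := by
    intro i
    rw [Real.volume_Ico]
    congr 1
    field_simp
    ring
  simp only [h, Finset.prod_const, Finset.card_fin]
  rw [← ENNReal.ofReal_pow (by positivity)]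

lemma toReal_volume_dyadicCube (d n : ℕ) (k : Fin d → ℕ) :
    (volume (dyadicCube d n k)).toReal = (((2:ℝ) ^ n)⁻¹) ^ d := by
  rw [volume_dyadicCube, ENNReal.toReal_ofReal (by positivity)]

lemma floor_mem_aux {x : Fin d → ℝ} (hx : x ∈ unitCube d) (n : ℕ) :
    (∀ i, ⌊x i * 2 ^ n⌋₊ < 2 ^ n) ∧ x ∈ dyadicCube d n (fun i => ⌊x i * 2 ^ n⌋₊) := by
  have h2 : (0:ℝ) < 2 ^ n := by positivity
  constructor
  · intro i
    have hxi := hx i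
    have : x i * 2 ^ n < 2 ^ n := by nlinarith [hxi.1, hxi.2]
    rw [Nat.floor_lt (by nlinarith [hxi.1] : (0:ℝ) ≤ x i * 2 ^ n)]
    exact_mod_cast this
  · intro i
    have hxi := hx i
    have hnn : (0:ℝ) ≤ x i * 2 ^ n := by nlinarith [hxi.1]
    constructor
    · rw [div_le_iff₀ h2]
      exact Nat.floor_le hnn
    · rw [lt_div_iff₀ h2]
      exact Nat.lt_floor_add_one _

lemma eq_floor_of_mem (n : ℕ) {k : ℕ} {t : ℝ}
    (h1 : (k : ℝ) / 2 ^ n ≤ t) (h2 : t < ((k : ℝ) + 1) / 2 ^ n) :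
    k = ⌊t * 2 ^ n⌋₊ := by
  have h2n : (0:ℝ) < 2 ^ n := by positivity
  rw [div_le_iff₀ h2n] at h1
  rw [lt_div_iff₀ h2n] at h2
  symm
  rw [Nat.floor_eq_iff (le_trans (by positivity) h1)]
  exact ⟨h1, by push_cast; linarith⟩

lemma dyadicCube_disjoint {d n : ℕ} {k k' : Fin d → ℕ} (hne : k ≠ k') :
    Disjoint (dyadicCube d n k) (dyadicCube d n k') := by
  rw [Set.disjoint_left]
  rintro x hx hx'
  apply hne
  funext i
  rw [eq_floor_of_mem n (hx i).1 (hx i).2, eq_floor_of_mem n (hx' i).1 (hx' i).2]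

lemma dyadicCube_injective (d n : ℕ) :
    Function.Injective (fun k : Fin d → Fin (2 ^ n) => dyadicCube d n (fun i => (k i : ℕ))) := by
  intro k k' h
  by_contra hne
  have hd : Disjoint (dyadicCube d n (fun i => (k i : ℕ))) (dyadicCube d n (fun i => (k' i : ℕ))) := by
    apply dyadicCube_disjoint
    intro he
    apply hne
    funext i
    exact Fin.ext (congrFun he i)
  have hmem : (fun i => ((k i : ℕ) : ℝ) / 2 ^ n) ∈ dyadicCube d n (fun i => (k i : ℕ)) := by
    intro i
    refine ⟨le_refl _, ?_⟩
    have h2n : (0:ℝ) < 2 ^ n := by positivity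
    rw [div_lt_div_iff₀ h2n h2n]
    nlinarith
  simp only at h
  rw [h] at hmem hd
  exact Set.disjoint_left.mp hd hmem hmem

lemma dyadicLevel_eq_range (d n : ℕ) :
    dyadicLevel d n =
      Set.range (fun k : Fin d → Fin (2 ^ n) => dyadicCube d n (fun i => (k i : ℕ))) := by
  ext Q
  constructor
  · rintro ⟨k, hk, rfl⟩
    exact ⟨fun i => ⟨k i, hk i⟩, rfl⟩
  · rintro ⟨k, rfl⟩
    exact ⟨fun i => (k i : ℕ), fun i => (k i).2, rfl⟩

lemma dyadicLevel_finite (d n : ℕ) : (dyadicLevel d n).Finite := by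
  rw [dyadicLevel_eq_range]; exact Set.finite_range _

lemma dyadicLevelD_finite (d n : ℕ) : (dyadicLevelD d n).Finite :=
  (dyadicLevel_finite d n).subset (fun Q hQ => hQ.1)

lemma mem_dyadicFamily_of_level {d n : ℕ} {Q : Set (Fin d → ℝ)} (h : Q ∈ dyadicLevel d n) :
    Q ∈ dyadicFamily d := Set.mem_iUnion.mpr ⟨n, h⟩

lemma dyadicCube_subset_unitCube {d n : ℕ} {k : Fin d → ℕ} (hk : ∀ i, k i < 2 ^ n) :
    dyadicCube d n k ⊆ unitCube d := by
  intro x hx i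
  have h2n : (0:ℝ) < 2 ^ n := by positivity
  have h1 := (hx i).1
  have h2 := (hx i).2
  constructor
  · exact le_trans (by positivity) h1
  · have hki : ((k i : ℝ) + 1) ≤ 2 ^ n := by
      have := hk i
      have : ((k i : ℕ) : ℝ) + 1 ≤ ((2:ℝ)) ^ n := by exact_mod_cast Nat.succ_le_of_lt this
      simpa using this
    have : ((k i : ℝ) + 1) / 2 ^ n ≤ 1 := by
      rw [div_le_one h2n]; exact hki
    linarith

lemma unitCube_eq_biUnion (d n : ℕ) :
    unitCube d = ⋃ Q ∈ dyadicLevel d n, Q := by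
  ext x
  constructor
  · intro hx
    obtain ⟨hlt, hmem⟩ := floor_mem_aux hx n
    exact Set.mem_biUnion ⟨_, hlt, rfl⟩ hmem
  · intro hx
    obtain ⟨Q, hQ, hxQ⟩ := Set.mem_iUnion₂.mp hx
    obtain ⟨k, hk, rfl⟩ := hQ
    exact dyadicCube_subset_unitCube hk hxQ

lemma volume_unitCube (d : ℕ) : volume (unitCube d) = 1 := by
  have : unitCube d = Set.pi Set.univ (fun _ : Fin d => Set.Ico (0:ℝ) 1) := by
    ext x; simp [unitCube, Set.mem_pi]
  rw [this, volume_pi_pi]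
  simp [Real.volume_Ico]

lemma measurableSet_unitCube (d : ℕ) : MeasurableSet (unitCube d) := by
  have : unitCube d = Set.pi Set.univ (fun _ : Fin d => Set.Ico (0:ℝ) 1) := by
    ext x; simp [unitCube, Set.mem_pi]
  rw [this]; exact MeasurableSet.univ_pi fun i => measurableSet_Ico

end CubeBasics
section Sums

open MeasureTheory

lemma cubeSum_eq_sum {d : ℕ} (F : Set (Set (Fin d → ℝ))) (hF : F.Finite)
    (J : Set (Fin d → ℝ) → ℝ) (q : ℝ) :
    cubeSum F J q = ∑ Q ∈ hF.toFinset, (if J Q = 0 then 0 else J Q ^ q) := by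
  rw [cubeSum]
  exact (tsum_congr_set_coe (fun Q => if J Q = 0 then 0 else J Q ^ q)
    (Set.Finite.coe_toFinset hF).symm).trans
    (Finset.tsum_subtype' hF.toFinset (fun Q => if J Q = 0 then 0 else J Q ^ q))

lemma level_card (d n : ℕ) : (dyadicLevel_finite d n).toFinset.card = (2 ^ n) ^ d := by
  rw [← Set.ncard_eq_toFinset_card _ (dyadicLevel_finite d n)]
  rw [dyadicLevel_eq_range, ← Set.image_univ,
    Set.ncard_image_of_injective _ (dyadicCube_injective d n)]
  simp [Set.ncard_univ]

lemma level_pairwiseDisjoint (d n : ℕ) :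
    ((dyadicLevel_finite d n).toFinset : Set (Set (Fin d → ℝ))).PairwiseDisjoint id := by
  intro Q hQ Q' hQ' hne
  simp only [Set.Finite.coe_toFinset] at hQ hQ'
  obtain ⟨k, hk, rfl⟩ := hQ
  obtain ⟨k', hk', rfl⟩ := hQ'
  exact dyadicCube_disjoint (fun h => hne (by rw [h]))

lemma level_biUnion (d n : ℕ) :
    ⋃ Q ∈ (dyadicLevel_finite d n).toFinset, Q = unitCube d := by
  rw [unitCube_eq_biUnion d n]
  ext x
  simp [Set.Finite.mem_toFinset]

lemma measurableSet_of_level {d n : ℕ} {Q : Set (Fin d → ℝ)} (h : Q ∈ dyadicLevel d n) :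
    MeasurableSet Q := by
  obtain ⟨k, hk, rfl⟩ := h
  exact measurableSet_dyadicCube d n k

lemma lintegral_level_sum (d n : ℕ) (g : (Fin d → ℝ) → ENNReal) (hg : Measurable g) :
    ∑ Q ∈ (dyadicLevel_finite d n).toFinset, ∫⁻ x in Q, g x ∂volume
      = ∫⁻ x in unitCube d, g x ∂volume := by
  have h1 := lintegral_biUnion_finset (μ := volume) (level_pairwiseDisjoint d n)
    (fun Q hQ => measurableSet_of_level ((dyadicLevel_finite d n).mem_toFinset.mp hQ)) g
  simp only [id_eq] at h1
  rw [← h1, level_biUnion d n]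

end Sums
section Helpers

open Filter

lemma sum_rpow_le_card_mul {ι : Type*} (s : Finset ι) (u : ι → ℝ) (hu : ∀ i ∈ s, 0 ≤ u i)
    {t : ℝ} (ht0 : 0 ≤ t) (ht1 : t ≤ 1) :
    ∑ i ∈ s, u i ^ t ≤ (s.card : ℝ) ^ (1 - t) * (∑ i ∈ s, u i) ^ t := by
  rcases s.eq_empty_or_nonempty with rfl | hne
  · simp only [Finset.sum_empty, Finset.card_empty, Nat.cast_zero]
    positivity
  rcases eq_or_lt_of_le ht0 with rfl | ht0'
  · simp only [Real.rpow_zero, sub_zero, Real.rpow_one, mul_one, Finset.sum_const,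
      nsmul_eq_mul, mul_one, le_refl]
  have hN : (0:ℝ) < s.card := by exact_mod_cast Finset.card_pos.mpr hne
  have hwsum : ∑ _i ∈ s, (s.card : ℝ)⁻¹ = 1 := by
    rw [Finset.sum_const, nsmul_eq_mul]
    field_simp
  have key := Real.arith_mean_le_rpow_mean s (fun _ => (s.card : ℝ)⁻¹) (fun i => u i ^ t)
      (fun i _ => by positivity) hwsum
      (fun i hi => Real.rpow_nonneg (hu i hi) _) (p := 1/t)
      (by rw [le_div_iff₀ ht0']; linarith)
  have hz : ∀ i ∈ s, (u i ^ t) ^ (1/t : ℝ) = u i := by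
    intro i hi
    rw [← Real.rpow_mul (hu i hi), mul_one_div, div_self (ne_of_gt ht0'), Real.rpow_one]
  rw [one_div_one_div] at key
  have key2 : ∑ i ∈ s, (s.card : ℝ)⁻¹ * u i ^ t ≤ ((s.card : ℝ)⁻¹ * ∑ i ∈ s, u i) ^ t := by
    refine le_trans key ?_
    apply le_of_eq
    congr 1
    rw [Finset.mul_sum]
    exact Finset.sum_congr rfl fun i hi => by rw [hz i hi]
  have hfinal : ∑ i ∈ s, u i ^ t = (s.card : ℝ) * ∑ i ∈ s, (s.card : ℝ)⁻¹ * u i ^ t := by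
    rw [Finset.mul_sum]
    refine (Finset.sum_congr rfl fun i _ => ?_)
    field_simp
  rw [hfinal]
  calc (s.card : ℝ) * ∑ i ∈ s, (s.card : ℝ)⁻¹ * u i ^ t
      ≤ (s.card : ℝ) * ((s.card : ℝ)⁻¹ * ∑ i ∈ s, u i) ^ t :=
        mul_le_mul_of_nonneg_left key2 hN.le
    _ = (s.card : ℝ) ^ (1 - t) * (∑ i ∈ s, u i) ^ t := by
        rw [Real.mul_rpow (by positivity) (Finset.sum_nonneg hu), Real.inv_rpow hN.le,
          Real.rpow_sub hN, Real.rpow_one]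
        have hpt : (0:ℝ) < (s.card:ℝ) ^ t := Real.rpow_pos_of_pos hN t
        field_simp

lemma card_mul_le_sum_rpow {ι : Type*} (s : Finset ι) (u : ι → ℝ) (hu : ∀ i ∈ s, 0 ≤ u i)
    {p : ℝ} (hp : 1 ≤ p) (hne : s.Nonempty) :
    (s.card : ℝ) ^ (1 - p) * (∑ i ∈ s, u i) ^ p ≤ ∑ i ∈ s, u i ^ p := by
  have hN : (0:ℝ) < s.card := by exact_mod_cast Finset.card_pos.mpr hne
  have hwsum : ∑ _i ∈ s, (s.card : ℝ)⁻¹ = 1 := by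
    rw [Finset.sum_const, nsmul_eq_mul]; field_simp
  have key := Real.rpow_arith_mean_le_arith_mean_rpow s (fun _ => (s.card : ℝ)⁻¹) u
      (fun i _ => by positivity) hwsum hu hp
  -- key : (∑ (1/N) u)^p ≤ ∑ (1/N) u^p
  have h1 : (∑ i ∈ s, (s.card : ℝ)⁻¹ * u i) = (s.card : ℝ)⁻¹ * ∑ i ∈ s, u i := by
    rw [Finset.mul_sum]
  have h2 : (∑ i ∈ s, (s.card : ℝ)⁻¹ * u i ^ p) = (s.card : ℝ)⁻¹ * ∑ i ∈ s, u i ^ p := by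
    rw [Finset.mul_sum]
  rw [h1, h2] at key
  have key3 : (s.card : ℝ) * (((s.card : ℝ)⁻¹ * ∑ i ∈ s, u i) ^ p) ≤ ∑ i ∈ s, u i ^ p := by
    calc (s.card : ℝ) * (((s.card : ℝ)⁻¹ * ∑ i ∈ s, u i) ^ p)
        ≤ (s.card : ℝ) * ((s.card : ℝ)⁻¹ * ∑ i ∈ s, u i ^ p) :=
          mul_le_mul_of_nonneg_left key hN.le
      _ = ∑ i ∈ s, u i ^ p := by field_simp
  refine le_trans (le_of_eq ?_) key3
  rw [Real.mul_rpow (by positivity) (Finset.sum_nonneg hu), Real.inv_rpow hN.le,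
    Real.rpow_sub hN, Real.rpow_one]
  have hpt : (0:ℝ) < (s.card:ℝ) ^ p := Real.rpow_pos_of_pos hN p
  field_simp

lemma mem_dyadicLevelD_of_bounds {d n : ℕ} {k : Fin d → ℕ} (hk : ∀ i, k i < 2 ^ n)
    (h1 : ∀ i, (1:ℝ) ≤ (k i : ℝ)) (h2 : ∀ i, ((k i : ℝ) + 1) < 2 ^ n) :
    dyadicCube d n k ∈ dyadicLevelD d n := by
  have h2n : (0:ℝ) < 2 ^ n := by positivity
  refine ⟨⟨k, hk, rfl⟩, ?_⟩
  have hcl : closure (dyadicCube d n k) =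
      Set.pi Set.univ (fun i => Set.Icc ((k i:ℝ)/2^n) (((k i:ℝ)+1)/2^n)) := by
    rw [dyadicCube_eq_pi, closure_pi_set]
    refine congrArg (Set.pi Set.univ) (funext fun i => ?_)
    have hne : ((k i:ℝ)/2^n) ≠ (((k i:ℝ)+1)/2^n) := by
      apply ne_of_lt
      rw [div_lt_div_iff₀ h2n h2n]
      have hki : (0:ℝ) ≤ (k i : ℝ) := Nat.cast_nonneg _
      nlinarith
    exact closure_Ico hne
  rw [hcl, Set.eq_empty_iff_forall_notMem]
  rintro x ⟨hx1, hx2⟩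
  refine Set.disjoint_left.mp disjoint_interior_frontier ?_ hx2
  rw [interior_pi_set Set.finite_univ]
  intro i _
  rw [interior_Icc]
  have hxi := hx1 i (Set.mem_univ i)
  simp only [Set.mem_Icc] at hxi
  constructor
  · have : (0:ℝ) < (k i : ℝ) / 2 ^ n := by
      apply div_pos (by linarith [h1 i]) h2n
    linarith [hxi.1]
  · have : ((k i : ℝ) + 1) / 2 ^ n < 1 := by
      rw [div_lt_one h2n]; exact h2 i
    linarith [hxi.2]

lemma tendsto_tau_of_bounds (α C₁ C₂ : ℝ) (hC₁ : 0 < C₁) (hC₂ : 0 < C₂) (S : ℕ → ℝ) (N₀ : ℕ)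
    (hlow : ∀ n, N₀ ≤ n → C₁ * (2:ℝ) ^ (α * (n:ℝ)) ≤ S n)
    (hhigh : ∀ n, N₀ ≤ n → S n ≤ C₂ * (2:ℝ) ^ (α * (n:ℝ))) :
    Filter.Tendsto (fun n : ℕ => elog (S n) * ((((n : ℝ) * Real.log 2)⁻¹ : ℝ) : EReal))
      Filter.atTop (nhds (α : EReal)) := by
  have hlog2 : (0:ℝ) < Real.log 2 := Real.log_pos (by norm_num)
  set x : ℕ → ℝ := fun n => Real.log (S n) * ((n : ℝ) * Real.log 2)⁻¹ with hxdef
  have hb : Filter.Tendsto (fun n : ℕ => ((n : ℝ) * Real.log 2)⁻¹) Filter.atTop (nhds 0) := by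
    apply Filter.Tendsto.inv_tendsto_atTop
    exact Filter.Tendsto.atTop_mul_const hlog2 tendsto_natCast_atTop_atTop
  have hxt : Filter.Tendsto x Filter.atTop (nhds α) := by
    have h1 : Filter.Tendsto (fun n : ℕ => α + Real.log C₁ * ((n:ℝ) * Real.log 2)⁻¹)
        Filter.atTop (nhds α) := by
      have := (hb.const_mul (Real.log C₁)).const_add α
      simpa using this
    have h2 : Filter.Tendsto (fun n : ℕ => α + Real.log C₂ * ((n:ℝ) * Real.log 2)⁻¹)
        Filter.atTop (nhds α) := by
      have := (hb.const_mul (Real.log C₂)).const_add α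
      simpa using this
    apply tendsto_of_tendsto_of_tendsto_of_le_of_le' h1 h2
    · filter_upwards [Filter.eventually_ge_atTop (max N₀ 1)] with n hn
      have hn1 : 1 ≤ n := le_trans (le_max_right _ _) hn
      have hnN : N₀ ≤ n := le_trans (le_max_left _ _) hn
      have hnr : (1:ℝ) ≤ (n:ℝ) := by exact_mod_cast hn1
      have hnpos : (0:ℝ) < (n:ℝ) * Real.log 2 := by nlinarith
      have hS := hlow n hnN
      have hls : Real.log C₁ + α * n * Real.log 2 ≤ Real.log (S n) := by
        have := Real.log_le_log (by positivity) hS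
        rw [Real.log_mul (ne_of_gt hC₁) (by positivity), Real.log_rpow two_pos] at this
        linarith
      have heq : α + Real.log C₁ * ((n:ℝ) * Real.log 2)⁻¹
          = (Real.log C₁ + α * n * Real.log 2) * ((n:ℝ) * Real.log 2)⁻¹ := by
        field_simp
        ring
      rw [hxdef]
      simp only
      rw [heq]
      exact mul_le_mul_of_nonneg_right hls (inv_nonneg.mpr hnpos.le)
    · filter_upwards [Filter.eventually_ge_atTop (max N₀ 1)] with n hn
      have hn1 : 1 ≤ n := le_trans (le_max_right _ _) hn
      have hnN : N₀ ≤ n := le_trans (le_max_left _ _) hn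
      have hnr : (1:ℝ) ≤ (n:ℝ) := by exact_mod_cast hn1
      have hnpos : (0:ℝ) < (n:ℝ) * Real.log 2 := by nlinarith
      have hSpos : 0 < S n := lt_of_lt_of_le (by positivity) (hlow n hnN)
      have hS := hhigh n hnN
      have hls : Real.log (S n) ≤ Real.log C₂ + α * n * Real.log 2 := by
        have := Real.log_le_log hSpos hS
        rw [Real.log_mul (ne_of_gt hC₂) (by positivity), Real.log_rpow two_pos] at this
        linarith
      have heq : α + Real.log C₂ * ((n:ℝ) * Real.log 2)⁻¹
          = (Real.log C₂ + α * n * Real.log 2) * ((n:ℝ) * Real.log 2)⁻¹ := by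
        field_simp
        ring
      rw [hxdef]
      simp only
      rw [heq]
      exact mul_le_mul_of_nonneg_right hls (inv_nonneg.mpr hnpos.le)
  have hev : ∀ᶠ n in Filter.atTop,
      ((x n : ℝ) : EReal) = elog (S n) * ((((n : ℝ) * Real.log 2)⁻¹ : ℝ) : EReal) := by
    filter_upwards [Filter.eventually_ge_atTop N₀] with n hn
    have hSpos : 0 < S n := lt_of_lt_of_le (by positivity) (hlow n hn)
    rw [elog, if_neg (not_le.mpr hSpos), ← EReal.coe_mul]
  refine Filter.Tendsto.congr' hev (EReal.tendsto_coe.mpr hxt)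

end Helpers
section MeasureLemmas

open MeasureTheory

lemma lintegral_holder {d : ℕ} (g : (Fin d → ℝ) → ENNReal) (hg : Measurable g) {r : ℝ}
    (hr : 1 < r) (s : Set (Fin d → ℝ)) :
    ∫⁻ x in s, g x ∂volume
      ≤ (∫⁻ x in s, g x ^ r ∂volume) ^ (1/r) * (volume s) ^ (1 - 1/r) := by
  have hr0 : (0:ℝ) < r := by linarith
  have hr1 : r - 1 ≠ 0 := by intro h; apply absurd hr; simp; nlinarith
  have hpq : Real.HolderConjugate r (r/(r-1)) := by
    rw [Real.holderConjugate_iff]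
    constructor
    · exact hr
    · field_simp
      ring
  calc ∫⁻ x in s, g x ∂volume = ∫⁻ x in s, g x * (fun _ => (1:ENNReal)) x ∂volume := by
        simp
    _ ≤ (∫⁻ x in s, g x ^ r ∂volume) ^ (1/r)
        * (∫⁻ x in s, (fun _ => (1:ENNReal)) x ^ (r/(r-1)) ∂volume) ^ (1/(r/(r-1))) :=
        ENNReal.lintegral_mul_le_Lp_mul_Lq _ hpq hg.aemeasurable aemeasurable_const
    _ = (∫⁻ x in s, g x ^ r ∂volume) ^ (1/r) * (volume s) ^ (1 - 1/r) := by
        congr 1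
        · congr 1
          · simp [ENNReal.one_rpow]
          · rw [one_div_div]
            field_simp
    _ = _ := rfl

lemma toReal_holder {d : ℕ} (g : (Fin d → ℝ) → ENNReal) (hg : Measurable g) {r : ℝ}
    (hr : 1 < r) (s : Set (Fin d → ℝ))
    (hfin : ∫⁻ x in s, g x ^ r ∂volume ≠ ⊤) (hvol : volume s ≠ ⊤) :
    (∫⁻ x in s, g x ∂volume).toReal
      ≤ (∫⁻ x in s, g x ^ r ∂volume).toReal ^ (1/r) * (volume s).toReal ^ (1 - 1/r) := by
  have h := lintegral_holder g hg hr s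
  have hRfin : (∫⁻ x in s, g x ^ r ∂volume) ^ (1/r) * (volume s) ^ (1 - 1/r) ≠ ⊤ := by
    apply ENNReal.mul_ne_top
    · exact ENNReal.rpow_ne_top_of_nonneg (by positivity) hfin
    · exact ENNReal.rpow_ne_top_of_nonneg (by
        have : 1/r < 1 := by rw [div_lt_one (by linarith)]; linarith
        linarith) hvol
  calc (∫⁻ x in s, g x ∂volume).toReal
      ≤ ((∫⁻ x in s, g x ^ r ∂volume) ^ (1/r) * (volume s) ^ (1 - 1/r)).toReal :=
        ENNReal.toReal_mono hRfin h
    _ = _ := by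
        rw [ENNReal.toReal_mul, ENNReal.toReal_rpow, ENNReal.toReal_rpow]

lemma nu_apply {d : ℕ} (f : (Fin d → ℝ) → ℝ) (ν : Measure (Fin d → ℝ))
    (hνdef : ν = (volume.restrict (unitCube d)).withDensity fun x => ENNReal.ofReal (f x))
    {s : Set (Fin d → ℝ)} (hs : MeasurableSet s) (hss : s ⊆ unitCube d) :
    ν s = ∫⁻ x in s, ENNReal.ofReal (f x) ∂volume := by
  rw [hνdef, withDensity_apply _ hs, Measure.restrict_restrict hs,
    Set.inter_eq_self_of_subset_left hss]

end MeasureLemmas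
section MassLemma

open MeasureTheory Filter

lemma dirichlet_mass {d : ℕ} (hd : 0 < d) (ν : Measure (Fin d → ℝ))
    (hnull : ν (Set.univ \ Set.pi Set.univ (fun _ : Fin d => Set.Ioo (0:ℝ) 1)) = 0)
    (hν0 : ν Set.univ ≠ 0) (hνfin : ν Set.univ ≠ ⊤) :
    ∃ n₁ : ℕ, ∀ n, n₁ ≤ n →
      (ν Set.univ).toReal / 2 ≤ ∑ Q ∈ (dyadicLevelD_finite d n).toFinset, (ν Q).toReal := by
  set piIoo : Set (Fin d → ℝ) := Set.pi Set.univ (fun _ : Fin d => Set.Ioo (0:ℝ) 1) with hpidef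
  have hIoo : ν piIoo = ν Set.univ := by
    apply le_antisymm (measure_mono (Set.subset_univ _))
    calc ν Set.univ ≤ ν (piIoo ∪ (Set.univ \ piIoo)) := by
          apply measure_mono
          intro x _
          by_cases h : x ∈ piIoo
          · exact Or.inl h
          · exact Or.inr ⟨trivial, h⟩
      _ ≤ ν piIoo + ν (Set.univ \ piIoo) := measure_union_le _ _
      _ = ν piIoo := by rw [hnull, add_zero]
  set E : ℕ → Set (Fin d → ℝ) :=
    fun j => Set.pi Set.univ (fun _ => Set.Ico (((2:ℝ)^j)⁻¹) (1 - ((2:ℝ)^j)⁻¹)) with hEdef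
  have hEmono : Monotone E := by
    intro j j' hj x hx i _
    have hxi := hx i (Set.mem_univ i)
    have hpow : ((2:ℝ)^j')⁻¹ ≤ ((2:ℝ)^j)⁻¹ := by
      apply inv_anti₀ (by positivity)
      exact pow_le_pow_right₀ (by norm_num) hj
    exact ⟨le_trans hpow hxi.1, lt_of_lt_of_le hxi.2 (by linarith)⟩
  have hEunion : ⋃ j, E j = piIoo := by
    ext x
    constructor
    · rintro hx
      obtain ⟨j, hx⟩ := Set.mem_iUnion.mp hx
      intro i _
      have hxi := hx i (Set.mem_univ i)
      have h1 : (0:ℝ) < ((2:ℝ)^j)⁻¹ := by positivity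
      exact ⟨by linarith [hxi.1], by linarith [hxi.2]⟩
    · intro hx
      have hne : (Finset.univ : Finset (Fin d)).Nonempty := by
        refine ⟨⟨0, hd⟩, Finset.mem_univ _⟩
      set ε : ℝ := Finset.univ.inf' hne (fun i => min (x i) (1 - x i)) with hεdef
      have hεpos : 0 < ε := by
        rw [hεdef, Finset.lt_inf'_iff]
        intro i _
        have hxi := hx i (Set.mem_univ i)
        exact lt_min hxi.1 (by linarith [hxi.2])
      obtain ⟨j, hj⟩ := exists_pow_lt_of_lt_one hεpos (by norm_num : (1:ℝ)/2 < 1)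
      have hj' : ((2:ℝ)^j)⁻¹ < ε := by
        have heq : ((1:ℝ)/2)^j = ((2:ℝ)^j)⁻¹ := by
          rw [div_pow, one_pow, one_div]
        rw [← heq]
        exact hj
      refine Set.mem_iUnion.mpr ⟨j, fun i _ => ?_⟩
      have hmin : ε ≤ min (x i) (1 - x i) := Finset.inf'_le _ (Finset.mem_univ i)
      have h1 : ε ≤ x i := le_trans hmin (min_le_left _ _)
      have h2 : ε ≤ 1 - x i := le_trans hmin (min_le_right _ _)
      exact ⟨le_of_lt (lt_of_lt_of_le hj' h1), by linarith⟩
  have htend : Tendsto (fun j => ν (E j)) atTop (nhds (ν Set.univ)) := by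
    have h := tendsto_measure_iUnion_atTop (μ := ν) hEmono
    rw [hEunion, hIoo] at h
    exact h
  have hhalf : ν Set.univ / 2 < ν Set.univ := ENNReal.half_lt_self hν0 hνfin
  obtain ⟨j₁, hj₁⟩ := (htend.eventually (eventually_gt_nhds hhalf)).exists
  refine ⟨j₁ + 1, fun n hn => ?_⟩
  set 𝔇 := (dyadicLevelD_finite d n).toFinset with h𝔇def
  have hA : (0:ℝ) < (2:ℝ)^j₁ := by positivity
  have h2n : (0:ℝ) < (2:ℝ)^n := by positivity
  have hpow2 : 2 * (2:ℝ)^j₁ ≤ (2:ℝ)^n := by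
    calc 2 * (2:ℝ)^j₁ = (2:ℝ)^(j₁+1) := by ring
      _ ≤ (2:ℝ)^n := pow_le_pow_right₀ (by norm_num) hn

  have hkey : (2:ℝ) ≤ ((2:ℝ)^j₁)⁻¹ * (2:ℝ)^n := by
    calc (2:ℝ) = ((2:ℝ)^j₁)⁻¹ * (2 * (2:ℝ)^j₁) := by field_simp
      _ ≤ ((2:ℝ)^j₁)⁻¹ * (2:ℝ)^n := mul_le_mul_of_nonneg_left hpow2 (by positivity)
  have hcover : E j₁ ⊆ ⋃ Q ∈ 𝔇, Q := by
    intro x hx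
    have hx𝒬 : x ∈ unitCube d := by
      intro i
      have hxi := hx i (Set.mem_univ i)
      have h1 : (0:ℝ) < ((2:ℝ)^j₁)⁻¹ := by positivity
      exact ⟨by linarith [hxi.1], by linarith [hxi.2]⟩
    obtain ⟨hlt, hmem⟩ := floor_mem_aux hx𝒬 n
    have hxb : ∀ i, ((2:ℝ)^j₁)⁻¹ ≤ x i ∧ x i < 1 - ((2:ℝ)^j₁)⁻¹ := by
      intro i; exact hx i (Set.mem_univ i)
    have hgain : ∀ i, (2:ℝ) ≤ x i * 2^n ∧ x i * 2^n < 2^n - 2 := by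
      intro i
      obtain ⟨hb1, hb2⟩ := hxb i
      constructor
      · calc (2:ℝ) ≤ ((2:ℝ)^j₁)⁻¹ * (2:ℝ)^n := hkey
          _ ≤ x i * 2^n := mul_le_mul_of_nonneg_right hb1 h2n.le
      · have h3 : x i * 2^n < (1 - ((2:ℝ)^j₁)⁻¹) * 2^n := mul_lt_mul_of_pos_right hb2 h2n
        nlinarith
    have h1k : ∀ i, (1:ℝ) ≤ (⌊x i * 2^n⌋₊ : ℝ) := by
      intro i
      have h1 : ((1:ℕ):ℝ) ≤ x i * 2^n := by
        push_cast
        linarith [(hgain i).1]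
      have : (1:ℕ) ≤ ⌊x i * 2^n⌋₊ := Nat.le_floor h1
      exact_mod_cast this
    have h2k : ∀ i, ((⌊x i * 2^n⌋₊ : ℝ) + 1) < 2^n := by
      intro i
      have hfl : (⌊x i * 2^n⌋₊ : ℝ) ≤ x i * 2^n := Nat.floor_le (by nlinarith [(hgain i).1])
      nlinarith [(hgain i).2]
    have hQD : dyadicCube d n (fun i => ⌊x i * 2^n⌋₊) ∈ dyadicLevelD d n :=
      mem_dyadicLevelD_of_bounds hlt h1k h2k
    exact Set.mem_biUnion ((dyadicLevelD_finite d n).mem_toFinset.mpr hQD) hmem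
  have hνE : ν Set.univ / 2 ≤ ν (⋃ Q ∈ 𝔇, Q) := le_trans hj₁.le (measure_mono hcover)
  have hsub : ν (⋃ Q ∈ 𝔇, Q) ≤ ∑ Q ∈ 𝔇, ν Q := by
    have h := measure_biUnion_finset_le (μ := ν) 𝔇 id
    simpa using h
  have hsum_ne : ∑ Q ∈ 𝔇, ν Q ≠ ⊤ := by
    rw [← lt_top_iff_ne_top]
    apply ENNReal.sum_lt_top.mpr
    intro Q _
    exact lt_of_le_of_lt (measure_mono (Set.subset_univ _)) (lt_top_iff_ne_top.mpr hνfin)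
  calc (ν Set.univ).toReal / 2 = (ν Set.univ / 2).toReal := by
        rw [ENNReal.toReal_div]; norm_num
    _ ≤ (∑ Q ∈ 𝔇, ν Q).toReal := ENNReal.toReal_mono hsum_ne (le_trans hνE hsub)
    _ = ∑ Q ∈ 𝔇, (ν Q).toReal :=
        ENNReal.toReal_sum (fun Q _ => ne_top_of_le_ne_top hνfin (measure_mono (Set.subset_univ _)))

end MassLemma
/-- For `d > 2` and an absolutely continuous measure `ν = f dΛ` on `𝒬`
with density `f ∈ L^r(Λ)` for some `r ≥ d/2`, the spectral partition function satisfies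
`liminf_n τ_{𝔍_ν,n}(q) = τ_{𝔍_ν}(q) = d − 2q` for all `q ∈ [0,r]`, both for the full
(Neumann) family of dyadic cubes and for the Dirichlet family. -/
theorem statement5 (d : ℕ) (hd : 2 < d) (f : (Fin d → ℝ) → ℝ)
    (hf : Measurable f) (hfnn : ∀ x, 0 ≤ f x) (r : ℝ) (hr : (d : ℝ) / 2 ≤ r)
    (hmem : MemLp f (ENNReal.ofReal r) (volume.restrict (unitCube d)))
    (ν : Measure (Fin d → ℝ))
    (hνdef : ν = (volume.restrict (unitCube d)).withDensity fun x => ENNReal.ofReal (f x))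
    (hν : ν ≠ 0) :
    ∀ q : ℝ, 0 ≤ q → q ≤ r →
      (Filter.liminf (fun n => tauApprox (dyadicLevel d) (Jnu ν) n q) Filter.atTop =
          tauFn (dyadicLevel d) (Jnu ν) q ∧
        tauFn (dyadicLevel d) (Jnu ν) q = (((d : ℝ) - 2 * q : ℝ) : EReal)) ∧
      (Filter.liminf (fun n => tauApprox (dyadicLevelD d) (Jnu ν) n q) Filter.atTop =
          tauFn (dyadicLevelD d) (Jnu ν) q ∧
        tauFn (dyadicLevelD d) (Jnu ν) q = (((d : ℝ) - 2 * q : ℝ) : EReal)) := by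
  intro q hq0 hqr
  -- basic numerology
  have hd0' : 0 < d := by omega
  have hd0 : (0:ℝ) < (d:ℝ) := by exact_mod_cast hd0'
  have hd3 : (3:ℝ) ≤ (d:ℝ) := by exact_mod_cast hd
  have hr1 : (1:ℝ) < r := by nlinarith
  have hr0 : (0:ℝ) < r := by linarith
  set g : (Fin d → ℝ) → ENNReal := fun x => ENNReal.ofReal (f x) with hgdef
  have hgm : Measurable g := ENNReal.measurable_ofReal.comp hf
  have hgrm : Measurable fun x => g x ^ r := hgm.pow_const r
  set e : ℝ := 2/(d:ℝ) - 1/r with hedef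
  have he0 : 0 ≤ e := by
    rw [hedef, sub_nonneg, div_le_div_iff₀ hr0 hd0]
    nlinarith
  set T : ENNReal := ∫⁻ x in unitCube d, g x ^ r ∂volume with hTdef
  have hTfin : T ≠ ⊤ := by
    have h1 : eLpNorm f (ENNReal.ofReal r) (volume.restrict (unitCube d)) < ⊤ := hmem.2
    rw [eLpNorm_eq_lintegral_rpow_enorm_toReal
      (by rw [Ne, ENNReal.ofReal_eq_zero]; linarith) ENNReal.ofReal_ne_top] at h1
    rw [ENNReal.toReal_ofReal hr0.le] at h1
    have heq : ∫⁻ a, ‖f a‖ₑ ^ r ∂(volume.restrict (unitCube d)) = T := by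
      rw [hTdef]
      apply lintegral_congr
      intro x
      rw [hgdef]
      simp only
      rw [Real.enorm_eq_ofReal (hfnn x)]
    rw [heq] at h1
    exact ((ENNReal.rpow_lt_top_iff_of_pos (by positivity : (0:ℝ) < 1/r)).mp h1).ne
  have hνuniv_val : ν Set.univ = ∫⁻ x in unitCube d, g x ∂volume := by
    rw [hνdef, withDensity_apply _ MeasurableSet.univ, Measure.restrict_univ]
  have hmT : ν Set.univ ≤ T ^ (1/r) := by
    rw [hνuniv_val]
    calc ∫⁻ x in unitCube d, g x ∂volume
        ≤ T ^ (1/r) * (volume (unitCube d)) ^ (1 - 1/r) := lintegral_holder g hgm hr1 _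
      _ = T ^ (1/r) := by rw [volume_unitCube, ENNReal.one_rpow, mul_one]
  have hνuniv : ν Set.univ ≠ ⊤ :=
    ne_top_of_le_ne_top (ENNReal.rpow_ne_top_of_nonneg (by positivity) hTfin) hmT
  have hν0 : ν Set.univ ≠ 0 := fun h => hν (Measure.measure_univ_eq_zero.mp h)
  set m : ℝ := (ν Set.univ).toReal with hmdef
  have hm0 : 0 < m := ENNReal.toReal_pos hν0 hνuniv
  have hT0 : T ≠ 0 := by
    intro h
    apply hν0
    have : T ^ (1/r) = 0 := by
      rw [h]
      exact ENNReal.zero_rpow_of_pos (by positivity)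
    exact le_antisymm (this ▸ hmT) zero_le
  set t₀ : ℝ := T.toReal with ht₀def
  have ht₀0 : 0 < t₀ := ENNReal.toReal_pos hT0 hTfin
  set νr : Set (Fin d → ℝ) → ℝ := fun s => (ν s).toReal with hνrdef
  set t : Set (Fin d → ℝ) → ℝ := fun s => (∫⁻ x in s, g x ^ r ∂volume).toReal with htdef
  set V : ℕ → ℝ := fun n => (((2:ℝ)^n)⁻¹)^d with hVdef
  have hV0 : ∀ n, 0 < V n := fun n => by rw [hVdef]; positivity
  -- dyadic family basic facts
  have hfam : ∀ Q' ∈ dyadicFamily d, MeasurableSet Q' ∧ Q' ⊆ unitCube d ∧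
      0 < (volume Q').toReal ∧ volume Q' ≠ ⊤ := by
    intro Q' hQ'
    obtain ⟨mm, hQm⟩ := Set.mem_iUnion.mp hQ'
    obtain ⟨k, hk, rfl⟩ := hQm
    refine ⟨measurableSet_dyadicCube d mm k, dyadicCube_subset_unitCube hk, ?_, ?_⟩
    · rw [toReal_volume_dyadicCube]; positivity
    · rw [volume_dyadicCube]; exact ENNReal.ofReal_ne_top
  have hint_le : ∀ s : Set (Fin d → ℝ), s ⊆ unitCube d →
      (∫⁻ x in s, g x ^ r ∂volume) ≤ T := fun s hs => lintegral_mono_set hs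
  have hint_fin : ∀ s : Set (Fin d → ℝ), s ⊆ unitCube d →
      (∫⁻ x in s, g x ^ r ∂volume) ≠ ⊤ :=
    fun s hs => ne_top_of_le_ne_top hTfin (hint_le s hs)
  have ht_le : ∀ s : Set (Fin d → ℝ), s ⊆ unitCube d → t s ≤ t₀ :=
    fun s hs => ENNReal.toReal_mono hTfin (hint_le s hs)
  have ht_mono : ∀ s s' : Set (Fin d → ℝ), s ⊆ s' → s' ⊆ unitCube d → t s ≤ t s' :=
    fun s s' hss hs' => ENNReal.toReal_mono (hint_fin s' hs') (lintegral_mono_set hss)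
  have ht_nonneg : ∀ s, 0 ≤ t s := fun s => ENNReal.toReal_nonneg
  -- real per-set Hoelder
  have hνr_le : ∀ s : Set (Fin d → ℝ), MeasurableSet s → s ⊆ unitCube d →
      νr s ≤ t s ^ (1/r) * (volume s).toReal ^ (1 - 1/r) := by
    intro s hsm hss
    have hvol : volume s ≠ ⊤ := by
      rw [← lt_top_iff_ne_top]
      calc volume s ≤ volume (unitCube d) := measure_mono hss
        _ = 1 := volume_unitCube d
        _ < ⊤ := ENNReal.one_lt_top
    have hval : νr s = (∫⁻ x in s, g x ∂volume).toReal := by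
      rw [hνrdef]
      simp only
      rw [nu_apply f ν hνdef hsm hss]
    rw [hval]
    exact toReal_holder g hgm hr1 s (hint_fin s hss) hvol
  -- level-n facts
  have hvolQ : ∀ n, ∀ Q ∈ dyadicLevel d n, (volume Q).toReal = V n := by
    rintro n Q ⟨k, hk, rfl⟩
    rw [toReal_volume_dyadicCube, hVdef]
  have hsum_t : ∀ n, ∑ Q ∈ (dyadicLevel_finite d n).toFinset, t Q ≤ t₀ := by
    intro n
    have hsum := lintegral_level_sum d n (fun x => g x ^ r) hgrm
    have heq : ∑ Q ∈ (dyadicLevel_finite d n).toFinset, t Q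
        = (∑ Q ∈ (dyadicLevel_finite d n).toFinset, ∫⁻ x in Q, g x ^ r ∂volume).toReal := by
      rw [ENNReal.toReal_sum]
      intro Q hQ
      have hQL := (dyadicLevel_finite d n).mem_toFinset.mp hQ
      exact hint_fin Q (hfam Q (mem_dyadicFamily_of_level hQL)).2.1
    rw [heq, hsum]
  -- Jnu facts
  have hJnu_eq : ∀ Q : Set (Fin d → ℝ), Jnu ν Q =
      sSup ((fun Q' => (ν Q').toReal * (volume Q').toReal ^ (2/(d:ℝ) - 1)) ''
        {Q' | Q' ∈ dyadicFamily d ∧ Q' ⊆ Q}) := by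
    intro Q
    rw [Jnu, Jab]
    simp only [Real.rpow_one]
  have hJnu_bdd : ∀ n, ∀ Q ∈ dyadicLevel d n, ∀ y ∈
      ((fun Q' => (ν Q').toReal * (volume Q').toReal ^ (2/(d:ℝ) - 1)) ''
        {Q' | Q' ∈ dyadicFamily d ∧ Q' ⊆ Q}), y ≤ t Q ^ (1/r) * V n ^ e := by
    intro n Q hQ y hy
    obtain ⟨Q', ⟨hQ'fam, hQ'sub⟩, rfl⟩ := hy
    obtain ⟨hQ'meas, hQ'cube, hQ'volpos, hQ'voltop⟩ := hfam Q' hQ'fam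
    have hQfam := mem_dyadicFamily_of_level hQ
    obtain ⟨hQmeas, hQcube, hQvolpos, hQvoltop⟩ := hfam Q hQfam
    have hV'leV : (volume Q').toReal ≤ V n := by
      rw [← hvolQ n Q hQ]
      exact ENNReal.toReal_mono hQvoltop (measure_mono hQ'sub)
    calc (ν Q').toReal * (volume Q').toReal ^ (2/(d:ℝ) - 1)
        ≤ (t Q' ^ (1/r) * (volume Q').toReal ^ (1 - 1/r)) * (volume Q').toReal ^ (2/(d:ℝ) - 1) :=
          mul_le_mul_of_nonneg_right (hνr_le Q' hQ'meas hQ'cube)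
            (Real.rpow_nonneg ENNReal.toReal_nonneg _)
      _ = t Q' ^ (1/r) * (volume Q').toReal ^ e := by
          rw [mul_assoc, ← Real.rpow_add hQ'volpos]
          congr 2
          rw [hedef]; ring
      _ ≤ t Q ^ (1/r) * V n ^ e := by
          apply mul_le_mul
          · exact Real.rpow_le_rpow (ht_nonneg Q') (ht_mono Q' Q hQ'sub hQcube) (by positivity)
          · exact Real.rpow_le_rpow ENNReal.toReal_nonneg hV'leV he0
          · exact Real.rpow_nonneg ENNReal.toReal_nonneg _
          · exact Real.rpow_nonneg (ht_nonneg Q) _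
  have hJnu_ge : ∀ n, ∀ Q ∈ dyadicLevel d n, νr Q * V n ^ (2/(d:ℝ) - 1) ≤ Jnu ν Q := by
    intro n Q hQ
    rw [hJnu_eq]
    apply le_csSup ⟨t Q ^ (1/r) * V n ^ e, fun y hy => hJnu_bdd n Q hQ y hy⟩
    refine ⟨Q, ⟨mem_dyadicFamily_of_level hQ, subset_refl Q⟩, ?_⟩
    simp only
    rw [hvolQ n Q hQ]
  have hJnu_nonneg : ∀ n, ∀ Q ∈ dyadicLevel d n, 0 ≤ Jnu ν Q := by
    intro n Q hQ
    refine le_trans ?_ (hJnu_ge n Q hQ)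
    have := hV0 n
    positivity
  have hJnu_le : ∀ n, ∀ Q ∈ dyadicLevel d n, Jnu ν Q ≤ t Q ^ (1/r) * V n ^ e := by
    intro n Q hQ
    rw [hJnu_eq]
    apply csSup_le
    · exact ⟨_, ⟨Q, ⟨mem_dyadicFamily_of_level hQ, subset_refl Q⟩, rfl⟩⟩
    · intro y hy
      exact hJnu_bdd n Q hQ y hy
  -- counting and rpow conversions
  have hcard : ∀ n, (((dyadicLevel_finite d n).toFinset.card : ℝ)) = (2:ℝ) ^ ((d:ℝ) * n) := by
    intro n
    rw [level_card]
    push_cast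
    rw [← pow_mul, ← Real.rpow_natCast (2:ℝ) (n * d)]
    congr 1
    push_cast
    ring
  have hVval : ∀ n, V n = (2:ℝ) ^ (-((d:ℝ) * n)) := by
    intro n
    rw [hVdef]
    simp only
    rw [← Real.rpow_natCast (2:ℝ) n, ← Real.rpow_neg (by norm_num : (0:ℝ) ≤ 2),
      ← Real.rpow_natCast ((2:ℝ) ^ (-(n:ℝ))) d, ← Real.rpow_mul (by norm_num : (0:ℝ) ≤ 2)]
    congr 1
    ring
  have hVpow : ∀ n (c : ℝ), V n ^ c = (2:ℝ) ^ (-((d:ℝ) * n) * c) := by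
    intro n c
    rw [hVval n, ← Real.rpow_mul (by norm_num : (0:ℝ) ≤ 2)]
  -- UPPER BOUND
  have hupper : ∀ n, cubeSum (dyadicLevel d n) (Jnu ν) q
      ≤ (t₀ ^ (q/r)) * (2:ℝ) ^ (((d:ℝ) - 2*q) * n) := by
    intro n
    rw [cubeSum_eq_sum _ (dyadicLevel_finite d n)]
    have hterm : ∀ Q ∈ (dyadicLevel_finite d n).toFinset,
        (if Jnu ν Q = 0 then 0 else Jnu ν Q ^ q) ≤ (t Q ^ (1/r) * V n ^ e) ^ q := by
      intro Q hQ
      have hQL := (dyadicLevel_finite d n).mem_toFinset.mp hQ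
      split_ifs with h
      · apply Real.rpow_nonneg
        have h1 := hV0 n
        have h2 := ht_nonneg Q
        positivity
      · exact Real.rpow_le_rpow (hJnu_nonneg n Q hQL) (hJnu_le n Q hQL) hq0
    have hs : (0:ℝ) ≤ q / r := by positivity
    have hs1 : q / r ≤ 1 := by rw [div_le_one hr0]; exact hqr
    calc ∑ Q ∈ (dyadicLevel_finite d n).toFinset, (if Jnu ν Q = 0 then 0 else Jnu ν Q ^ q)
        ≤ ∑ Q ∈ (dyadicLevel_finite d n).toFinset, (t Q ^ (1/r) * V n ^ e) ^ q :=
          Finset.sum_le_sum hterm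
      _ = V n ^ (e * q) * ∑ Q ∈ (dyadicLevel_finite d n).toFinset, t Q ^ (q/r) := by
          rw [Finset.mul_sum]
          apply Finset.sum_congr rfl
          intro Q hQ
          rw [Real.mul_rpow (Real.rpow_nonneg (ht_nonneg Q) _) (Real.rpow_nonneg (hV0 n).le _),
            ← Real.rpow_mul (ht_nonneg Q), ← Real.rpow_mul (hV0 n).le]
          rw [show 1/r*q = q/r from by ring]
          ring
      _ ≤ V n ^ (e * q) * ((((dyadicLevel_finite d n).toFinset.card : ℝ)) ^ (1 - q/r)
            * (∑ Q ∈ (dyadicLevel_finite d n).toFinset, t Q) ^ (q/r)) :=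
          mul_le_mul_of_nonneg_left
            (sum_rpow_le_card_mul _ t (fun Q _ => ht_nonneg Q) hs hs1)
            (Real.rpow_nonneg (hV0 n).le _)
      _ ≤ V n ^ (e * q) * ((((dyadicLevel_finite d n).toFinset.card : ℝ)) ^ (1 - q/r)
            * t₀ ^ (q/r)) := by
          apply mul_le_mul_of_nonneg_left _ (Real.rpow_nonneg (hV0 n).le _)
          apply mul_le_mul_of_nonneg_left _ (Real.rpow_nonneg (Nat.cast_nonneg _) _)
          exact Real.rpow_le_rpow (Finset.sum_nonneg fun Q _ => ht_nonneg Q) (hsum_t n) hs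
      _ = t₀ ^ (q/r) * (2:ℝ) ^ (((d:ℝ) - 2*q) * n) := by
          rw [hcard n, hVpow n (e*q), ← Real.rpow_mul (by norm_num : (0:ℝ) ≤ 2)]
          rw [show (2:ℝ)^(-((d:ℝ)*n)*(e*q)) * ((2:ℝ)^((d:ℝ)*n*(1-q/r)) * t₀^(q/r))
              = t₀^(q/r) * ((2:ℝ)^(-((d:ℝ)*n)*(e*q)) * (2:ℝ)^((d:ℝ)*n*(1-q/r))) from by ring,
            ← Real.rpow_add (by norm_num : (0:ℝ) < 2)]
          congr 2
          rw [hedef]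
          field_simp
          try ring
  -- LOWER BOUND
  have hlower : ∃ C₁, 0 < C₁ ∧ ∃ N₀ : ℕ, ∀ n, N₀ ≤ n →
      C₁ * (2:ℝ) ^ (((d:ℝ) - 2*q) * n) ≤ cubeSum (dyadicLevelD d n) (Jnu ν) q := by
    have hnull : ν (Set.univ \ Set.pi Set.univ (fun _ : Fin d => Set.Ioo (0:ℝ) 1)) = 0 := by
      have hac : ν ≪ volume.restrict (unitCube d) := by
        rw [hνdef]; exact withDensity_absolutelyContinuous _ _
      apply hac
      rw [Measure.restrict_apply (MeasurableSet.univ.diff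
        (MeasurableSet.univ_pi fun _ => measurableSet_Ioo))]
      have hzero : volume (⋃ i : Fin d, {x : Fin d → ℝ | x i = 0}) = 0 := by
        apply measure_iUnion_null
        intro i
        rw [volume_pi]
        exact Measure.pi_hyperplane _ i 0
      apply measure_mono_null _ hzero
      rintro x ⟨⟨-, hnot⟩, hx𝒬⟩
      rw [Set.mem_pi] at hnot
      push_neg at hnot
      obtain ⟨i, -, hi⟩ := hnot
      have h𝒬 := hx𝒬 i
      refine Set.mem_iUnion.mpr ⟨i, ?_⟩
      simp only [Set.mem_setOf_eq]
      rw [Set.mem_Ioo] at hi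
      push_neg at hi
      rcases lt_or_eq_of_le h𝒬.1 with hlt | heq
      · exact absurd (hi hlt) (not_le.mpr h𝒬.2)
      · exact heq.symm
    obtain ⟨n₁, hmass⟩ := dirichlet_mass hd0' ν hnull hν0 hνuniv
    set 𝔇' : ℕ → Finset (Set (Fin d → ℝ)) :=
      fun n => (dyadicLevelD_finite d n).toFinset.filter (fun Q => 0 < νr Q) with h𝔇'def
    have hDsubF : ∀ n, (dyadicLevelD_finite d n).toFinset ⊆ (dyadicLevel_finite d n).toFinset := by
      intro n
      rw [Set.Finite.toFinset_subset_toFinset]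
      exact fun Q hQ => hQ.1
    have hmemL : ∀ n, ∀ Q ∈ 𝔇' n, Q ∈ dyadicLevel d n := by
      intro n Q hQ
      exact (dyadicLevel_finite d n).mem_toFinset.mp (hDsubF n (Finset.mem_filter.mp hQ).1)
    have hM : ∀ n, n₁ ≤ n → m/2 ≤ ∑ Q ∈ 𝔇' n, νr Q := by
      intro n hn
      rw [h𝔇'def]
      rw [Finset.sum_filter_of_ne
        (fun Q _ hne => lt_of_le_of_ne ENNReal.toReal_nonneg (Ne.symm hne))]
      exact hmass n hn
    have hred : ∀ n, V n ^ ((2/(d:ℝ)-1)*q) * ∑ Q ∈ 𝔇' n, νr Q ^ q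
        ≤ cubeSum (dyadicLevelD d n) (Jnu ν) q := by
      intro n
      rw [cubeSum_eq_sum _ (dyadicLevelD_finite d n), Finset.mul_sum]
      calc ∑ Q ∈ 𝔇' n, V n ^ ((2/(d:ℝ)-1)*q) * νr Q ^ q
          ≤ ∑ Q ∈ 𝔇' n, (if Jnu ν Q = 0 then 0 else Jnu ν Q ^ q) := by
            apply Finset.sum_le_sum
            intro Q hQ
            have hQL := hmemL n Q hQ
            have hνrpos : 0 < νr Q := (Finset.mem_filter.mp hQ).2
            have hVa : 0 < V n ^ (2/(d:ℝ)-1) := Real.rpow_pos_of_pos (hV0 n) _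
            have hbase : 0 < νr Q * V n ^ (2/(d:ℝ)-1) := mul_pos hνrpos hVa
            have hge := hJnu_ge n Q hQL
            have hJpos : 0 < Jnu ν Q := lt_of_lt_of_le hbase hge
            rw [if_neg (ne_of_gt hJpos)]
            calc V n ^ ((2/(d:ℝ)-1)*q) * νr Q ^ q
                = (νr Q * V n ^ (2/(d:ℝ)-1)) ^ q := by
                  rw [Real.mul_rpow hνrpos.le (Real.rpow_nonneg (hV0 n).le _),
                    ← Real.rpow_mul (hV0 n).le]
                  ring
              _ ≤ Jnu ν Q ^ q := Real.rpow_le_rpow hbase.le hge hq0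
        _ ≤ ∑ Q ∈ (dyadicLevelD_finite d n).toFinset, (if Jnu ν Q = 0 then 0 else Jnu ν Q ^ q) := by
            apply Finset.sum_le_sum_of_subset_of_nonneg (Finset.filter_subset _ _)
            intro Q hQ _
            split_ifs with h
            · exact le_refl 0
            · exact Real.rpow_nonneg
                (hJnu_nonneg n Q ((dyadicLevelD_finite d n).mem_toFinset.mp hQ).1) q
    have hY : ∀ n, ∑ Q ∈ 𝔇' n, νr Q ^ r ≤ t₀ * V n ^ (r-1) := by
      intro n
      calc ∑ Q ∈ 𝔇' n, νr Q ^ r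
          ≤ ∑ Q ∈ (dyadicLevel_finite d n).toFinset, νr Q ^ r := by
            apply Finset.sum_le_sum_of_subset_of_nonneg
              ((Finset.filter_subset _ _).trans (hDsubF n))
            intro Q _ _
            exact Real.rpow_nonneg ENNReal.toReal_nonneg r
        _ ≤ ∑ Q ∈ (dyadicLevel_finite d n).toFinset, t Q * V n ^ (r-1) := by
            apply Finset.sum_le_sum
            intro Q hQ
            have hQL := (dyadicLevel_finite d n).mem_toFinset.mp hQ
            obtain ⟨hQm, hQc, -, -⟩ := hfam Q (mem_dyadicFamily_of_level hQL)
            have h1 := hνr_le Q hQm hQc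
            rw [hvolQ n Q hQL] at h1
            calc νr Q ^ r ≤ (t Q ^ (1/r) * V n ^ (1-1/r)) ^ r :=
                  Real.rpow_le_rpow ENNReal.toReal_nonneg h1 hr0.le
              _ = t Q * V n ^ (r-1) := by
                  rw [Real.mul_rpow (Real.rpow_nonneg (ht_nonneg Q) _)
                      (Real.rpow_nonneg (hV0 n).le _),
                    ← Real.rpow_mul (ht_nonneg Q), ← Real.rpow_mul (hV0 n).le,
                    one_div_mul_cancel hr0.ne', Real.rpow_one]
                  congr 1
                  field_simp
        _ = (∑ Q ∈ (dyadicLevel_finite d n).toFinset, t Q) * V n ^ (r-1) := by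
            rw [← Finset.sum_mul]
        _ ≤ t₀ * V n ^ (r-1) :=
            mul_le_mul_of_nonneg_right (hsum_t n) (Real.rpow_nonneg (hV0 n).le _)
    have hXbound : ∃ C', 0 < C' ∧ ∀ n, n₁ ≤ n →
        C' * V n ^ (q-1) ≤ ∑ Q ∈ 𝔇' n, νr Q ^ q := by
      rcases le_or_gt 1 q with hq1 | hq1
      · refine ⟨(m/2)^q, Real.rpow_pos_of_pos (by linarith) q, fun n hn => ?_⟩
        have hMn := hM n hn
        have hne : (𝔇' n).Nonempty := by
          rw [Finset.nonempty_iff_ne_empty]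
          intro hemp
          rw [hemp, Finset.sum_empty] at hMn
          linarith
        have hNpos : (0:ℝ) < ((𝔇' n).card : ℝ) := by
          exact_mod_cast Finset.card_pos.mpr hne
        have hcard' : ((𝔇' n).card : ℝ) ≤ (2:ℝ) ^ ((d:ℝ)*n) := by
          rw [← hcard n]
          exact_mod_cast Finset.card_le_card ((Finset.filter_subset _ _).trans (hDsubF n))
        have hkey := card_mul_le_sum_rpow (𝔇' n) νr (fun Q _ => ENNReal.toReal_nonneg) hq1 hne
        refine le_trans ?_ hkey
        have hVeq : V n ^ (q-1) = ((2:ℝ) ^ ((d:ℝ)*n)) ^ (1-q) := by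
          rw [hVpow n (q-1), ← Real.rpow_mul (by norm_num : (0:ℝ) ≤ 2)]
          congr 1
          ring
        calc (m/2)^q * V n ^ (q-1) = V n ^ (q-1) * (m/2)^q := by ring
          _ ≤ ((𝔇' n).card : ℝ) ^ (1-q) * (∑ Q ∈ 𝔇' n, νr Q) ^ q := by
              apply mul_le_mul
              · rw [hVeq]
                exact Real.rpow_le_rpow_of_nonpos hNpos hcard' (by linarith)
              · exact Real.rpow_le_rpow (by linarith) hMn hq0
              · exact Real.rpow_nonneg (by linarith) q
              · exact Real.rpow_nonneg hNpos.le _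
      · set θ : ℝ := (r-1)/(r-q) with hθdef
        have hrq : 0 < r - q := by linarith
        have hθ0 : 0 < θ := div_pos (by linarith) hrq
        have hθ1 : θ < 1 := by rw [hθdef, div_lt_one hrq]; linarith
        have hm2 : (0:ℝ) < m/2 := by linarith
        refine ⟨(m/2)^(1/θ) * t₀ ^ (-(1-θ)/θ), by positivity, fun n hn => ?_⟩
        have hMn := hM n hn
        set X : ℝ := ∑ Q ∈ 𝔇' n, νr Q ^ q with hXdef
        set Y : ℝ := ∑ Q ∈ 𝔇' n, νr Q ^ r with hYdef
        have hXnn : 0 ≤ X :=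
          Finset.sum_nonneg fun Q _ => Real.rpow_nonneg ENNReal.toReal_nonneg _
        have hYnn : 0 ≤ Y :=
          Finset.sum_nonneg fun Q _ => Real.rpow_nonneg ENNReal.toReal_nonneg _
        have hpq' : Real.HolderConjugate (1/θ) (1/(1-θ)) := by
          rw [Real.holderConjugate_iff]
          constructor
          · rw [lt_div_iff₀ hθ0, one_mul]
            exact hθ1
          · rw [one_div, one_div, inv_inv, inv_inv]
            ring
        have hkey := Real.inner_le_Lp_mul_Lq_of_nonneg (𝔇' n) hpq'
          (f := fun Q => νr Q ^ (q*θ)) (g := fun Q => νr Q ^ (r*(1-θ)))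
          (fun Q _ => Real.rpow_nonneg ENNReal.toReal_nonneg _)
          (fun Q _ => Real.rpow_nonneg ENNReal.toReal_nonneg _)
        rw [one_div_one_div, one_div_one_div] at hkey
        have hLHS : ∑ Q ∈ 𝔇' n, (νr Q ^ (q*θ)) * (νr Q ^ (r*(1-θ)))
            = ∑ Q ∈ 𝔇' n, νr Q := by
          apply Finset.sum_congr rfl
          intro Q hQ
          have hpos : 0 < νr Q := (Finset.mem_filter.mp hQ).2
          rw [← Real.rpow_add hpos,
            show q*θ + r*(1-θ) = 1 from by rw [hθdef]; field_simp; ring]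
          exact Real.rpow_one _
        have hF : ∑ Q ∈ 𝔇' n, ((νr Q ^ (q*θ)) ^ (1/θ)) = X := by
          rw [hXdef]
          apply Finset.sum_congr rfl
          intro Q hQ
          rw [← Real.rpow_mul ENNReal.toReal_nonneg]
          congr 1
          field_simp
        have hG : ∑ Q ∈ 𝔇' n, ((νr Q ^ (r*(1-θ))) ^ (1/(1-θ))) = Y := by
          rw [hYdef]
          apply Finset.sum_congr rfl
          intro Q hQ
          rw [← Real.rpow_mul ENNReal.toReal_nonneg]
          congr 1
          have h1θ : (1:ℝ) - θ ≠ 0 := by linarith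
          field_simp
        rw [hLHS, hF, hG] at hkey
        have hmX : m/2 ≤ X^θ * Y^(1-θ) := le_trans hMn hkey
        have hYpos : 0 < Y := by
          rcases eq_or_lt_of_le hYnn with h0 | h
          · exfalso
            rw [← h0, Real.zero_rpow (by linarith : (1:ℝ) - θ ≠ 0), mul_zero] at hmX
            linarith
          · exact h
        have hYb := hY n
        have hstep1 : (m/2) * Y^(-(1-θ)) ≤ X^θ := by
          rw [Real.rpow_neg hYnn, mul_inv_le_iff₀ (Real.rpow_pos_of_pos hYpos _)]
          exact hmX
        have hstep2 : ((m/2) * Y^(-(1-θ)))^(1/θ) ≤ X := by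
          calc ((m/2) * Y^(-(1-θ)))^(1/θ) ≤ (X^θ)^(1/θ) := by
                apply Real.rpow_le_rpow _ hstep1 (by positivity)
                positivity
            _ = X := by
                rw [← Real.rpow_mul hXnn, mul_one_div, div_self hθ0.ne', Real.rpow_one]
        have hstep3 : ((m/2) * (t₀ * V n ^(r-1))^(-(1-θ)))^(1/θ)
            ≤ ((m/2) * Y^(-(1-θ)))^(1/θ) := by
          apply Real.rpow_le_rpow _ _ (by positivity)
          · positivity
          · apply mul_le_mul_of_nonneg_left _ hm2.le
            exact Real.rpow_le_rpow_of_nonpos hYpos hYb (by linarith)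
        refine le_trans (le_of_eq ?_) (le_trans hstep3 hstep2)
        have htV : (0:ℝ) < t₀ * V n ^ (r-1) := by positivity
        have h1 : r - q ≠ 0 := hrq.ne'
        have h2 : r - 1 ≠ 0 := by intro h; apply absurd hr1; intro _; linarith
        have he1 : -(1-θ)*(1/θ) = -(1-θ)/θ := by rw [mul_one_div]
        have he2 : (r-1)*(-(1-θ)/θ) = q - 1 := by
          rw [hθdef]
          field_simp
          try ring
        rw [Real.mul_rpow hm2.le (Real.rpow_nonneg htV.le _),
          ← Real.rpow_mul htV.le,
          Real.mul_rpow ht₀0.le (Real.rpow_nonneg (hV0 n).le _),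
          ← Real.rpow_mul (hV0 n).le, he1, he2]
        ring
    obtain ⟨C', hC'pos, hX⟩ := hXbound
    refine ⟨C', hC'pos, n₁, fun n hn => ?_⟩
    calc C' * (2:ℝ)^(((d:ℝ)-2*q)*n)
        = V n ^ ((2/(d:ℝ)-1)*q) * (C' * V n ^ (q-1)) := by
          rw [hVpow n ((2/(d:ℝ)-1)*q), hVpow n (q-1),
            show (2:ℝ)^(-((d:ℝ)*n)*((2/(d:ℝ)-1)*q)) * (C' * (2:ℝ)^(-((d:ℝ)*n)*(q-1)))
              = C' * ((2:ℝ)^(-((d:ℝ)*n)*((2/(d:ℝ)-1)*q)) * (2:ℝ)^(-((d:ℝ)*n)*(q-1)))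
              from by ring,
            ← Real.rpow_add (by norm_num : (0:ℝ) < 2)]
          congr 2
          field_simp
          try ring
      _ ≤ V n ^ ((2/(d:ℝ)-1)*q) * ∑ Q ∈ 𝔇' n, νr Q ^ q :=
          mul_le_mul_of_nonneg_left (hX n hn) (Real.rpow_nonneg (hV0 n).le _)
      _ ≤ cubeSum (dyadicLevelD d n) (Jnu ν) q := hred n
  -- Dirichlet sum below full sum
  have hDleF : ∀ n, cubeSum (dyadicLevelD d n) (Jnu ν) q ≤ cubeSum (dyadicLevel d n) (Jnu ν) q := by
    intro n
    rw [cubeSum_eq_sum _ (dyadicLevelD_finite d n), cubeSum_eq_sum _ (dyadicLevel_finite d n)]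
    apply Finset.sum_le_sum_of_subset_of_nonneg
    · rw [Set.Finite.toFinset_subset_toFinset]
      exact fun Q hQ => hQ.1
    · intro Q hQ _
      split_ifs with h
      · exact le_refl 0
      · exact Real.rpow_nonneg
          (hJnu_nonneg n Q ((dyadicLevel_finite d n).mem_toFinset.mp hQ)) q
  -- ASSEMBLY
  obtain ⟨C₁, hC₁, N₀, hlow⟩ := hlower
  have hC₂ : 0 < t₀ ^ (q/r) := Real.rpow_pos_of_pos ht₀0 _
  have h1 := tendsto_tau_of_bounds ((d:ℝ) - 2*q) C₁ (t₀ ^ (q/r)) hC₁ hC₂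
    (fun n => cubeSum (dyadicLevel d n) (Jnu ν) q) N₀
    (fun n hn => le_trans (hlow n hn) (hDleF n)) (fun n _ => hupper n)
  have h2 := tendsto_tau_of_bounds ((d:ℝ) - 2*q) C₁ (t₀ ^ (q/r)) hC₁ hC₂
    (fun n => cubeSum (dyadicLevelD d n) (Jnu ν) q) N₀
    (fun n hn => hlow n hn) (fun n _ => le_trans (hDleF n) (hupper n))
  have e1 : (fun n => tauApprox (dyadicLevel d) (Jnu ν) n q)
      = fun n : ℕ => elog (cubeSum (dyadicLevel d n) (Jnu ν) q)
        * ((((n : ℝ) * Real.log 2)⁻¹ : ℝ) : EReal) := rfl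
  have e2 : (fun n => tauApprox (dyadicLevelD d) (Jnu ν) n q)
      = fun n : ℕ => elog (cubeSum (dyadicLevelD d n) (Jnu ν) q)
        * ((((n : ℝ) * Real.log 2)⁻¹ : ℝ) : EReal) := rfl
  constructor
  · constructor
    · rw [tauFn, e1, h1.liminf_eq, h1.limsup_eq]
    · rw [tauFn, e1, h1.limsup_eq]
  · constructor
    · rw [tauFn, e2, h2.liminf_eq, h2.limsup_eq]
    · rw [tauFn, e2, h2.limsup_eq]
end
end
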